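/- arXiv:1412.8114 — 6 statements merged into one kernel-verified Lean document; each statement's English description precedes it below -/
import Mathlib

section
/- For every n ≥ 1, (n+1)^{n−1} = Σ_{π} n! / (∏_{B ∈ π} |B|!), where the sum runs over all non-crossing partitions π of the totally ordered set {1,…,n} and the product runs over the blocks B of π. -/
/-- `π` is a non-crossing partition of `{1,…,n}` (encoded as `Fin n`), given as its set of
blocks: blocks are nonempty, every element lies in exactly one block, and there are no
`a < b < c < d` with `a, c` in one block and `b, d` in a different block. -/
def IsNCPartition (n : ℕ) (π : Finset (Finset (Fin n))) : Prop :=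
  (∀ B ∈ π, B.Nonempty) ∧
  (∀ a : Fin n, ∃! B : Finset (Fin n), B ∈ π ∧ a ∈ B) ∧
  ¬ ∃ a b c d : Fin n, ∃ B ∈ π, ∃ B' ∈ π, B ≠ B' ∧
      a < b ∧ b < c ∧ c < d ∧ a ∈ B ∧ c ∈ B ∧ b ∈ B' ∧ d ∈ B'

/-!
Pollak's argument: for `g : Fin n → ZMod (n + 1)`, exactly one of the `n + 1` translates `g - c`
is a parking function (a cycle lemma), so there are `(n + 1) ^ (n - 1)` parking functions.
The fibre sizes `s j = #f⁻¹(j)` of a parking function form a ballot vector, and ballot vectors with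
sum `n` are exactly the block-size vectors of non-crossing partitions, recording `|B|` at `min B`:
the minimum of the block of `j` is the largest `m ≤ j` such that `[m, j]` carries mass at least
`j - m + 1`. The functions with a given fibre-size vector are an orbit of `Perm (Fin n)`, of size
`n! / ∏ |B|!` by orbit–stabiliser.
-/

open Finset
open scoped Nat

section FiberCard

variable {α β : Type*} [Fintype α] [DecidableEq β]

def fiberCard (f : α → β) (b : β) : ℕ := #{a | f a = b}

lemma sum_fiberCard (f : α → β) (t : Finset β) : ∑ b ∈ t, fiberCard f b = #{a | f a ∈ t} :=
  sum_card_fiberwise_eq_card_filter univ t f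

lemma fiberCard_comp_perm (f : α → β) (σ : Equiv.Perm α) : fiberCard (f ∘ σ) = fiberCard f := by
  funext b
  exact card_equiv σ (by simp)

lemma exists_perm_comp_eq_of_fiberCard_eq {f g : α → β} (h : fiberCard f = fiberCard g) :
    ∃ σ : Equiv.Perm α, g ∘ σ = f := by
  have e : ∀ b, {a // f a = b} ≃ {a // g a = b} := fun b =>
    Fintype.equivOfCardEq (by simpa [Fintype.card_subtype, fiberCard] using congrFun h b)
  exact ⟨Equiv.ofFiberEquiv e, funext (Equiv.ofFiberEquiv_map e)⟩

lemma mem_orbit_iff_fiberCard_eq {f g : α → β} :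
    f ∈ MulAction.orbit (Equiv.Perm α)ᵈᵐᵃ g ↔ fiberCard f = fiberCard g := by
  constructor
  · rintro ⟨c, rfl⟩
    exact fiberCard_comp_perm g _
  · intro h
    obtain ⟨σ, hσ⟩ := exists_perm_comp_eq_of_fiberCard_eq h
    exact ⟨DomMulAct.mk σ, funext fun a => by simp [DomMulAct.smul_apply, ← hσ]⟩

theorem card_fiberCard_eq_mul_prod_factorial [DecidableEq α] [Fintype β] (g : α → β) :
    #{f : α → β | fiberCard f = fiberCard g} * ∏ b, (fiberCard g b)! = (Fintype.card α)! := by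
  have hstab : Nat.card (MulAction.stabilizer (Equiv.Perm α)ᵈᵐᵃ g) = ∏ b, (fiberCard g b)! := by
    rw [← Nat.card_congr (Equiv.subtypeEquiv DomMulAct.mk
      fun σ => DomMulAct.mem_stabilizer_iff.symm), Nat.card_eq_fintype_card]
    simp only [Equiv.symm_apply_apply]
    rw [DomMulAct.stabilizer_card]
    simp [fiberCard, Fintype.card_subtype]
  have horbit : (MulAction.orbit (Equiv.Perm α)ᵈᵐᵃ g).ncard =
      #{f : α → β | fiberCard f = fiberCard g} := by
    rw [← Set.ncard_coe_finset]
    congr 1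
    ext f
    simp [mem_orbit_iff_fiberCard_eq]
  have hcard := (MulAction.stabilizer (Equiv.Perm α)ᵈᵐᵃ g).card_mul_index
  rw [MulAction.index_stabilizer, hstab, horbit, Nat.card_congr DomMulAct.mk.symm, Nat.card_perm,
    Nat.card_eq_fintype_card] at hcard
  rw [← hcard, mul_comm]

def partitionOfFibers [DecidableEq α] (f : α → β) : Finset (Finset α) :=
  univ.image fun a => ({x | f x = f a} : Finset α)

lemma existsUnique_mem_partitionOfFibers [DecidableEq α] (f : α → β) (a : α) :
    ∃! B, B ∈ partitionOfFibers f ∧ a ∈ B := by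
  refine ⟨({x | f x = f a} : Finset α), ⟨mem_image_of_mem _ (mem_univ a), by simp⟩, ?_⟩
  rintro B ⟨hB, haB⟩
  obtain ⟨b, -, rfl⟩ := mem_image.1 hB
  simp only [mem_filter, mem_univ, true_and] at haB
  simp [haB]

lemma prod_partitionOfFibers [DecidableEq α] [Fintype β] {M : Type*} [CommMonoid M] (f : α → β)
    (F : ℕ → M) (hF : F 0 = 1) : ∏ B ∈ partitionOfFibers f, F #B = ∏ b, F (fiberCard f b) := by
  have himage : partitionOfFibers f = (univ.image f).image fun b => ({x | f x = b} : Finset α) := by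
    rw [partitionOfFibers, image_image]; rfl
  rw [himage, prod_image, ← prod_subset (subset_univ _)]
  · rfl
  · intro b _ hb
    rw [fiberCard, filter_false_of_mem fun a _ (ha : f a = b) =>
      hb (ha ▸ mem_image_of_mem f (mem_univ a)), card_empty, hF]
  · intro b hb b' _ h
    obtain ⟨a, -, rfl⟩ := mem_image.1 hb
    simpa using (Finset.ext_iff.1 h a).1 (by simp)

end FiberCard

lemma sum_Icc_eq_add_sum_Ioc {α M : Type*} [LinearOrder α] [LocallyFiniteOrder α]
    [AddCommMonoid M] (f : α → M) {a b c : α} (hab : a ≤ b) (hbc : b ≤ c) :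
    ∑ i ∈ Icc a c, f i = ∑ i ∈ Icc a b, f i + ∑ i ∈ Ioc b c, f i := by
  rw [← sum_union (disjoint_left.2 fun x hx hx' => (mem_Icc.1 hx).2.not_gt (mem_Ioc.1 hx').1)]
  congr 1
  exact coe_injective (by push_cast; exact (Set.Icc_union_Ioc_eq_Icc hab hbc).symm)

theorem existsUnique_le_of_periodic_drop (n : ℕ) (D : ℕ → ℤ) (hD : ∀ t, D (t + (n + 1)) = D t - 1) :
    ∃! a, a < n + 1 ∧ ∀ k < n, D a ≤ D (a + (k + 1)) := by
  set Good := fun a => a < n + 1 ∧ ∀ k < n, D a ≤ D (a + (k + 1))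
  have lt_of_good : ∀ x y, Good x → y < x → D x < D y := by
    rintro x y ⟨hx, hgood⟩ hyx
    have := hgood (y + n - x) (by omega)
    rw [show x + (y + n - x + 1) = y + (n + 1) by omega, hD] at this
    omega
  have le_of_good : ∀ x y, Good x → x < y → y < n + 1 → D x ≤ D y := by
    rintro x y ⟨hx, hgood⟩ hxy hy
    simpa [show x + (y - x - 1 + 1) = y by omega] using hgood (y - x - 1) (by omega)
  have hmin : ∃ a, a < n + 1 ∧ ∀ b < n + 1, D a ≤ D b := by
    obtain ⟨a, ha, hmin⟩ := exists_min_image (range (n + 1)) D ⟨0, by simp⟩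
    exact ⟨a, mem_range.1 ha, fun b hb => hmin b (mem_range.2 hb)⟩
  set a := Nat.find hmin
  obtain ⟨ha, ha_min⟩ : a < n + 1 ∧ ∀ b < n + 1, D a ≤ D b := Nat.find_spec hmin
  -- The first minimiser on `[0, n]`: points of the next period lie lower by one, but the
  -- points they come from lie strictly higher.
  have hgood : Good a := by
    refine ⟨ha, fun k hk => ?_⟩
    rcases lt_or_ge (a + (k + 1)) (n + 1) with hlt | hge
    · exact ha_min _ hlt
    · obtain ⟨c, hc, hcb⟩ : ∃ c < n + 1, D c < D (a + k - n) := by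
        have := Nat.find_min hmin (show a + k - n < a by omega)
        push Not at this
        exact this (by omega)
      rw [show a + (k + 1) = a + k - n + (n + 1) by omega, hD]
      linarith [ha_min c hc]
  refine ⟨a, hgood, fun x hx => ?_⟩
  rcases lt_trichotomy x a with h | h | h
  · exact absurd (le_of_good x _ hx h ha) (not_le.2 (lt_of_good _ x hgood h))
  · exact h
  · exact absurd (le_of_good _ x hgood h hx.1) (not_le.2 (lt_of_good x _ hx h))

variable {n : ℕ}

def IsParkingFunction (f : Fin n → Fin n) : Prop := ∀ k : Fin n, (k : ℕ) + 1 ≤ #{i | f i ≤ k}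

instance : DecidablePred (IsParkingFunction (n := n)) := fun f => by
  unfold IsParkingFunction; infer_instance

def IsParkingShift (g : Fin n → ZMod (n + 1)) (c : ZMod (n + 1)) : Prop :=
  ∀ k < n, k + 1 ≤ #{i | (g i - c).val ≤ k}

lemma val_sub_natCast_eq_iff {x : ZMod (n + 1)} {a t : ℕ} (ht : t < n + 1) :
    (x - a).val = t ↔ x = ((a + t : ℕ) : ZMod (n + 1)) := by
  rw [← ZMod.val_cast_of_lt ht, (ZMod.val_injective _).eq_iff, Nat.cast_add, ZMod.natCast_val,
    ZMod.cast_id', id, sub_eq_iff_eq_add']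

lemma card_val_sub_le_eq_sum (g : Fin n → ZMod (n + 1)) (a : ℕ) {k : ℕ} (hk : k ≤ n) :
    #{i | (g i - a).val ≤ k} = ∑ t ∈ range (k + 1), #{i | g i = ((a + t : ℕ) : ZMod (n + 1))} := by
  rw [card_eq_sum_card_fiberwise (f := fun i => (g i - a).val) (t := range (k + 1))
    fun i hi => by simpa [Nat.lt_succ_iff] using hi]
  refine sum_congr rfl fun t ht => ?_
  have htk : t ≤ k := Nat.lt_succ_iff.1 (mem_range.1 ht)
  congr 1
  ext i
  simp only [mem_filter, mem_univ, true_and, ← val_sub_natCast_eq_iff (by omega : t < n + 1)]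
  constructor
  · exact And.right
  · intro h; exact ⟨by omega, h⟩

lemma existsUnique_isParkingShift (g : Fin n → ZMod (n + 1)) : ∃! c, IsParkingShift g c := by
  set D : ℕ → ℤ := fun t => ∑ u ∈ range t, (#{i | g i = u} : ℤ) - t
  have hstep : ∀ a k, k ≤ n → D (a + (k + 1)) = D a + #{i | (g i - a).val ≤ k} - (k + 1) := by
    intro a k hk
    simp only [D, card_val_sub_le_eq_sum g a hk, sum_range_add]
    push_cast
    ring
  have hdrop : ∀ t, D (t + (n + 1)) = D t - 1 := by
    intro t
    have hall : #{i | (g i - t).val ≤ n} = n := by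
      rw [filter_true_of_mem fun i _ => Nat.lt_succ_iff.1 (ZMod.val_lt _), card_univ,
        Fintype.card_fin]
    rw [hstep t n le_rfl, hall]
    ring
  have hshift : ∀ a : ℕ, IsParkingShift g a ↔ ∀ k < n, D a ≤ D (a + (k + 1)) := by
    refine fun a => forall₂_congr fun k hk => ?_
    rw [hstep a k hk.le]
    omega
  obtain ⟨a, ⟨ha, hgood⟩, huniq⟩ := existsUnique_le_of_periodic_drop n D hdrop
  refine ⟨a, (hshift a).2 hgood, fun c hc => ?_⟩
  rw [← ZMod.natCast_zmod_val c] at hc ⊢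
  rw [huniq c.val ⟨ZMod.val_lt c, (hshift _).1 hc⟩]

lemma isParkingShift_natCast_add_iff (f : Fin n → Fin n) (c : ZMod (n + 1)) :
    IsParkingShift (fun i => ((f i : ℕ) : ZMod (n + 1)) + c) c ↔ IsParkingFunction f := by
  have hval : ∀ i, (((f i : ℕ) : ZMod (n + 1)) + c - c).val = f i := fun i => by
    rw [add_sub_cancel_right, ZMod.val_cast_of_lt (by omega)]
  simp only [IsParkingShift, IsParkingFunction, hval, Fin.forall_iff, Fin.le_def]

lemma val_sub_lt_of_isParkingShift {g : Fin n → ZMod (n + 1)} {c : ZMod (n + 1)}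
    (h : IsParkingShift g c) (i : Fin n) : (g i - c).val < n := by
  have hall : #{j | (g j - c).val ≤ n - 1} = #(univ : Finset (Fin n)) := by
    have := h (n - 1) (Nat.sub_lt i.pos one_pos)
    have := card_filter_le univ fun j => (g j - c).val ≤ n - 1
    rw [card_univ, Fintype.card_fin] at *
    omega
  have := card_filter_eq_iff.1 hall i (mem_univ i)
  have := i.pos
  omega

lemma natCast_val_injective : Function.Injective fun i : Fin n => ((i : ℕ) : ZMod (n + 1)) := by
  intro i j h
  have := congrArg ZMod.val h
  simp only [ZMod.val_cast_of_lt (Nat.lt_succ_of_lt i.2),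
    ZMod.val_cast_of_lt (Nat.lt_succ_of_lt j.2)] at this
  exact Fin.ext this

theorem card_parkingFunctions : #{f : Fin n → Fin n | IsParkingFunction f} = (n + 1) ^ (n - 1) := by
  let Φ : ZMod (n + 1) × {f : Fin n → Fin n // IsParkingFunction f} → (Fin n → ZMod (n + 1)) :=
    fun p i => ((p.2.1 i : ℕ) : ZMod (n + 1)) + p.1
  have hΦ : ∀ p, IsParkingShift (Φ p) p.1 := fun p => (isParkingShift_natCast_add_iff _ _).2 p.2.2
  have hbij : Function.Bijective Φ := by
    constructor
    · rintro ⟨c, f, hf⟩ ⟨c', f', hf'⟩ h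
      have hc' := hΦ (c', ⟨f', hf'⟩)
      rw [← h] at hc'
      obtain rfl : c = c' := (existsUnique_isParkingShift _).unique (hΦ (c, ⟨f, hf⟩)) hc'
      have : f = f' := funext fun i => by
        have := congrFun h i
        simp only [Φ, add_left_inj] at this
        exact natCast_val_injective this
      subst this
      rfl
    · intro g
      obtain ⟨c, hc, -⟩ := existsUnique_isParkingShift g
      let f : Fin n → Fin n := fun i => ⟨(g i - c).val, val_sub_lt_of_isParkingShift hc i⟩
      have hgf : (fun i => ((f i : ℕ) : ZMod (n + 1)) + c) = g := funext fun i => by simp [f]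
      exact ⟨(c, ⟨f, (isParkingShift_natCast_add_iff f c).1 (hgf ▸ hc)⟩), hgf⟩
  have hcard := Fintype.card_congr (Equiv.ofBijective Φ hbij)
  rw [Fintype.card_prod, Fintype.card_subtype, ZMod.card, Fintype.card_fun, ZMod.card,
    Fintype.card_fin] at hcard
  have hpow : (n + 1) ^ n = (n + 1) * (n + 1) ^ (n - 1) := by
    cases n <;> simp [pow_succ']
  exact Nat.eq_of_mul_eq_mul_left n.succ_pos (hcard.trans hpow)

def IsBallot (s : Fin n → ℕ) : Prop := ∀ k : Fin n, (k : ℕ) + 1 ≤ ∑ j ∈ Iic k, s j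

lemma isParkingFunction_iff_isBallot (f : Fin n → Fin n) :
    IsParkingFunction f ↔ IsBallot (fiberCard f) := by
  refine forall_congr' fun k => ?_
  rw [sum_fiberCard]
  simp only [mem_Iic]

def CoversInterval (s : Fin n → ℕ) (m j : Fin n) : Prop :=
  m ≤ j ∧ (j : ℕ) - m + 1 ≤ ∑ i ∈ Icc m j, s i

instance (s : Fin n → ℕ) (j : Fin n) : DecidablePred (CoversInterval s · j) := fun m => by
  unfold CoversInterval; infer_instance

-- When `s` records `|B|` at `min B` for the blocks `B` of a non-crossing partition, this is the
-- minimum of the block of `j`.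
def ballotMin (s : Fin n → ℕ) (j : Fin n) : Fin n :=
  if h : ({m | CoversInterval s m j} : Finset (Fin n)).Nonempty then max' _ h else j

section BallotMin

variable {s : Fin n → ℕ}

lemma le_ballotMin {m j : Fin n} (h : CoversInterval s m j) : m ≤ ballotMin s j := by
  have hm : m ∈ ({m | CoversInterval s m j} : Finset (Fin n)) := by simpa using h
  rw [ballotMin, dif_pos ⟨m, hm⟩]
  exact le_max' _ _ hm

lemma sum_Ioc_lt_of_ballotMin_le {x j : Fin n} (hxj : x < j) (h : ballotMin s j ≤ x) :
    ∑ i ∈ Ioc x j, s i < (j : ℕ) - x := by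
  -- otherwise `[m, j]` is covered for the first `m ∈ (x, j]` with `s m ≠ 0`
  by_contra! hsum
  have hne : ({i ∈ Ioc x j | s i ≠ 0} : Finset (Fin n)).Nonempty := by
    by_contra! hzero
    have : ∑ i ∈ Ioc x j, s i = 0 := sum_eq_zero fun i hi => by
      by_contra hi'; exact (eq_empty_iff_forall_notMem.1 hzero) i (mem_filter.2 ⟨hi, hi'⟩)
    have : (x : ℕ) < j := hxj
    omega
  set m := min' _ hne
  obtain ⟨hm, -⟩ := mem_filter.1 (min'_mem _ hne)
  have hsum_m : ∑ i ∈ Icc m j, s i = ∑ i ∈ Ioc x j, s i := by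
    refine sum_subset (fun i hi => mem_Ioc.2 ⟨(mem_Ioc.1 hm).1.trans_le (mem_Icc.1 hi).1,
      (mem_Icc.1 hi).2⟩) fun i hi hi' => ?_
    by_contra hsi
    exact hi' (mem_Icc.2 ⟨min'_le _ _ (mem_filter.2 ⟨hi, hsi⟩), (mem_Ioc.1 hi).2⟩)
  have hxm : (x : ℕ) < m := (mem_Ioc.1 hm).1
  have hcov : CoversInterval s m j := ⟨(mem_Ioc.1 hm).2, by rw [hsum_m]; omega⟩
  exact absurd ((mem_Ioc.1 hm).1.trans_le (le_ballotMin hcov)) (not_lt.2 h)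

variable (hs : IsBallot s)
include hs

lemma coversInterval_ballotMin (j : Fin n) : CoversInterval s (ballotMin s j) j := by
  have h0 : CoversInterval s (⟨0, j.pos⟩ : Fin n) j := by
    refine ⟨Fin.mk_le_of_le_val (Nat.zero_le _), ?_⟩
    have hIcc : Icc (⟨0, j.pos⟩ : Fin n) j = Iic j := by
      ext x; simp only [mem_Icc, mem_Iic, Fin.le_def]; omega
    simpa [hIcc] using hs j
  have hne : ({m | CoversInterval s m j} : Finset (Fin n)).Nonempty := ⟨_, by simpa using h0⟩
  rw [ballotMin, dif_pos hne]
  simpa using max'_mem _ hne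

lemma ballotMin_le (j : Fin n) : ballotMin s j ≤ j := (coversInterval_ballotMin hs j).1

lemma ballotMin_of_ne_zero {j : Fin n} (hj : s j ≠ 0) : ballotMin s j = j :=
  le_antisymm (ballotMin_le hs j) (le_ballotMin ⟨le_rfl, by simp; omega⟩)

lemma ballotMin_ne_zero (j : Fin n) : s (ballotMin s j) ≠ 0 := by
  intro hzero
  obtain ⟨hle, hcov⟩ := coversInterval_ballotMin hs j
  rcases hle.eq_or_lt with heq | hlt
  · rw [heq] at hzero hcov
    simp [hzero] at hcov
  · have := sum_Ioc_lt_of_ballotMin_le hlt le_rfl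
    rw [sum_Icc_eq_add_sum_Ioc s le_rfl hle, Icc_self, sum_singleton, hzero] at hcov
    omega

lemma ballotMin_ballotMin (j : Fin n) : ballotMin s (ballotMin s j) = ballotMin s j :=
  ballotMin_of_ne_zero hs (ballotMin_ne_zero hs j)

lemma le_ballotMin_of_le_of_le {j j' : Fin n} (h : ballotMin s j' ≤ j) (h' : j ≤ j') :
    ballotMin s j' ≤ ballotMin s j := by
  by_contra! hlt
  rcases h'.eq_or_lt with rfl | hjj'
  · exact lt_irrefl _ hlt
  have hshort : ¬ CoversInterval s (ballotMin s j') j := fun hc => (le_ballotMin hc).not_gt hlt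
  have hcov := (coversInterval_ballotMin hs j').2
  have htail := sum_Ioc_lt_of_ballotMin_le hjj' h
  rw [sum_Icc_eq_add_sum_Ioc s h h'] at hcov
  simp only [CoversInterval, h, true_and, not_le] at hshort
  have : (j : ℕ) ≤ j' := h'
  omega

lemma fiberCard_ballotMin_le (m : Fin n) : fiberCard (ballotMin s) m ≤ s m := by
  -- the surplus of `[m, j]` stays in `[1, s m]` and strictly decreases along the fibre of `m`
  set v : Fin n → ℕ := fun j => ∑ i ∈ Icc m j, s i - (j - m)
  have hmaps : ∀ j, ballotMin s j = m → v j ∈ Icc 1 (s m) := by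
    rintro j rfl
    obtain ⟨hle, hcov⟩ := coversInterval_ballotMin hs j
    rw [mem_Icc]
    rcases hle.eq_or_lt with heq | hlt
    · simp only [v, heq, Icc_self, sum_singleton] at hcov ⊢
      omega
    · have := sum_Ioc_lt_of_ballotMin_le hlt le_rfl
      rw [sum_Icc_eq_add_sum_Ioc s le_rfl hle, Icc_self, sum_singleton] at hcov
      simp only [v, sum_Icc_eq_add_sum_Ioc s le_rfl hle, Icc_self, sum_singleton]
      omega
  have hanti : StrictAntiOn v {j | ballotMin s j = m} := by
    rintro j rfl j' (hj' : ballotMin s j' = ballotMin s j) hjj'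
    have hcov := (coversInterval_ballotMin hs j).2
    have hle := ballotMin_le hs j
    have := sum_Ioc_lt_of_ballotMin_le hjj' (hj'.trans_le hle)
    simp only [v, sum_Icc_eq_add_sum_Ioc s hle hjj'.le]
    have : (j : ℕ) < j' := hjj'
    omega
  calc fiberCard (ballotMin s) m ≤ #(Icc 1 (s m)) :=
        card_le_card_of_injOn v (fun j hj => hmaps j (by simpa using hj))
          (hanti.injOn.mono fun j hj => by simpa using hj)
    _ = s m := by simp

lemma fiberCard_ballotMin (hsum : ∑ j, s j = n) : fiberCard (ballotMin s) = s := by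
  have htotal : ∑ j, fiberCard (ballotMin s) j = ∑ j, s j := by
    rw [sum_fiberCard, hsum]; simp
  funext m
  exact (sum_eq_sum_iff_of_le fun m _ => fiberCard_ballotMin_le hs m).1 htotal m (mem_univ m)

end BallotMin

-- The fallback `{a}` makes `a ∈ block π a` unconditional, so `blockMin` needs no side condition.
noncomputable def block (π : Finset (Finset (Fin n))) (a : Fin n) : Finset (Fin n) :=
  if h : ∃ B ∈ π, a ∈ B then h.choose else {a}

lemma mem_block (π : Finset (Finset (Fin n))) (a : Fin n) : a ∈ block π a := by
  unfold block
  split_ifs with h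
  · exact h.choose_spec.2
  · exact mem_singleton_self a

noncomputable def blockMin (π : Finset (Finset (Fin n))) (a : Fin n) : Fin n :=
  (block π a).min' ⟨a, mem_block π a⟩

lemma blockMin_mem_block (π : Finset (Finset (Fin n))) (a : Fin n) : blockMin π a ∈ block π a :=
  min'_mem _ _

lemma blockMin_le_of_mem {π : Finset (Finset (Fin n))} {a x : Fin n} (hx : x ∈ block π a) :
    blockMin π a ≤ x :=
  min'_le _ _ hx

lemma blockMin_le (π : Finset (Finset (Fin n))) (a : Fin n) : blockMin π a ≤ a :=
  blockMin_le_of_mem (mem_block π a)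

lemma isParkingFunction_blockMin (π : Finset (Finset (Fin n))) :
    IsParkingFunction (blockMin π) := by
  intro k
  calc (k : ℕ) + 1 = #(Iic k) := (Fin.card_Iic k).symm
    _ ≤ #{x | blockMin π x ≤ k} :=
      card_le_card fun x hx => mem_filter.2 ⟨mem_univ x, (blockMin_le π x).trans (mem_Iic.1 hx)⟩

section Partition

variable {π : Finset (Finset (Fin n))} (hπ : ∀ a, ∃! B, B ∈ π ∧ a ∈ B)
include hπ

lemma block_mem (a : Fin n) : block π a ∈ π := by
  have h : ∃ B ∈ π, a ∈ B := (hπ a).exists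
  rw [block, dif_pos h]
  exact h.choose_spec.1

lemma block_eq {B : Finset (Fin n)} {a : Fin n} (hB : B ∈ π) (ha : a ∈ B) : block π a = B :=
  (hπ a).unique ⟨block_mem hπ a, mem_block π a⟩ ⟨hB, ha⟩

lemma blockMin_eq_blockMin_iff {a b : Fin n} :
    blockMin π a = blockMin π b ↔ block π a = block π b := by
  refine ⟨fun h => ?_, fun h => by rw [blockMin, blockMin]; congr 1⟩
  rw [← block_eq hπ (block_mem hπ a) (blockMin_mem_block π a), h,
    block_eq hπ (block_mem hπ b) (blockMin_mem_block π b)]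

lemma blockMin_blockMin (a : Fin n) : blockMin π (blockMin π a) = blockMin π a :=
  (blockMin_eq_blockMin_iff hπ).2 (block_eq hπ (block_mem hπ a) (blockMin_mem_block π a))

lemma partitionOfFibers_blockMin (hne : ∀ B ∈ π, B.Nonempty) :
    partitionOfFibers (blockMin π) = π := by
  have hfiber : ∀ a, ({x | blockMin π x = blockMin π a} : Finset (Fin n)) = block π a := fun a => by
    ext x
    rw [mem_filter, blockMin_eq_blockMin_iff hπ]
    exact ⟨fun ⟨_, h⟩ => h ▸ mem_block π x, fun hx => ⟨mem_univ x, block_eq hπ (block_mem hπ a) hx⟩⟩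
  ext B
  simp only [partitionOfFibers, mem_image, mem_univ, true_and, hfiber]
  refine ⟨fun ⟨a, hB⟩ => hB ▸ block_mem hπ a, fun hB => ?_⟩
  obtain ⟨a, ha⟩ := hne B hB
  exact ⟨a, block_eq hπ hB ha⟩

end Partition

section FiberPartition

variable {μ : Fin n → Fin n}

lemma blockMin_partitionOfFibers (hle : ∀ a, μ a ≤ a) (hidem : ∀ a, μ (μ a) = μ a) :
    blockMin (partitionOfFibers μ) = μ := by
  funext a
  have hblock : block (partitionOfFibers μ) a = ({x | μ x = μ a} : Finset (Fin n)) :=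
    block_eq (existsUnique_mem_partitionOfFibers μ) (mem_image_of_mem _ (mem_univ a)) (by simp)
  have hmem := blockMin_mem_block (partitionOfFibers μ) a
  rw [hblock, mem_filter] at hmem
  refine le_antisymm (blockMin_le_of_mem ?_) ?_
  · rw [hblock, mem_filter]; exact ⟨mem_univ _, hidem a⟩
  · exact hmem.2 ▸ hle _

lemma isNCPartition_partitionOfFibers
    (hnc : ∀ a b c d, a < b → b < c → c < d → μ a = μ c → μ b = μ d → μ a = μ b) :
    IsNCPartition n (partitionOfFibers μ) := by
  refine ⟨fun B hB => ?_, existsUnique_mem_partitionOfFibers μ, ?_⟩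
  · obtain ⟨a, -, rfl⟩ := mem_image.1 hB
    exact ⟨a, by simp⟩
  · rintro ⟨a, b, c, d, B, hB, B', hB', hne, hab, hbc, hcd, haB, hcB, hbB', hdB'⟩
    obtain ⟨x, -, rfl⟩ := mem_image.1 hB
    obtain ⟨y, -, rfl⟩ := mem_image.1 hB'
    simp only [mem_filter, mem_univ, true_and] at haB hcB hbB' hdB'
    refine hne ?_
    rw [← haB, ← hbB', hnc a b c d hab hbc hcd (haB.trans hcB.symm) (hbB'.trans hdB'.symm)]

end FiberPartition

section NCPartition

variable {π : Finset (Finset (Fin n))} (hπ : IsNCPartition n π)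
include hπ

lemma IsNCPartition.blockMin_eq_of_lt_of_lt_of_lt {a b c d : Fin n} (hab : a < b) (hbc : b < c)
    (hcd : c < d) (hac : blockMin π a = blockMin π c) (hbd : blockMin π b = blockMin π d) :
    blockMin π a = blockMin π b := by
  have hcover := hπ.2.1
  by_contra hne
  refine hπ.2.2 ⟨a, b, c, d, block π a, block_mem hcover a, block π b, block_mem hcover b,
    fun h => hne ((blockMin_eq_blockMin_iff hcover).2 h), hab, hbc, hcd, mem_block π a, ?_,
    mem_block π b, ?_⟩
  · rw [(blockMin_eq_blockMin_iff hcover).1 hac]; exact mem_block π c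
  · rw [(blockMin_eq_blockMin_iff hcover).1 hbd]; exact mem_block π d

lemma IsNCPartition.coversInterval_blockMin (j : Fin n) :
    CoversInterval (fiberCard (blockMin π)) (blockMin π j) j := by
  have hidem := blockMin_blockMin hπ.2.1
  refine ⟨blockMin_le π j, ?_⟩
  have hsub :
      Icc (blockMin π j) j ⊆ ({x | blockMin π x ∈ Icc (blockMin π j) j} : Finset (Fin n)) := by
    intro x hx
    obtain ⟨hjx, hxj⟩ := mem_Icc.1 hx
    refine mem_filter.2 ⟨mem_univ x, mem_Icc.2 ⟨?_, (blockMin_le π x).trans hxj⟩⟩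
    by_contra! hlt
    rcases hjx.eq_or_lt with rfl | hjx
    · exact hlt.ne (hidem j)
    rcases hxj.eq_or_lt with rfl | hxj
    · exact lt_irrefl _ hlt
    exact hlt.ne (by simpa only [hidem] using
      hπ.blockMin_eq_of_lt_of_lt_of_lt hlt hjx hxj (hidem x) (hidem j))
  rw [sum_fiberCard]
  calc (j : ℕ) - blockMin π j + 1 = #(Icc (blockMin π j) j) := by
        rw [Fin.card_Icc]; have : (blockMin π j : ℕ) ≤ j := blockMin_le π j; omega
    _ ≤ _ := card_le_card hsub

lemma IsNCPartition.not_coversInterval_of_blockMin_lt {m j : Fin n} (hm : blockMin π j < m) :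
    ¬ CoversInterval (fiberCard (blockMin π)) m j := by
  have hidem := blockMin_blockMin hπ.2.1
  rintro ⟨hmj, hcov⟩
  rw [sum_fiberCard] at hcov
  have hsub : ({x | blockMin π x ∈ Icc m j} : Finset (Fin n)) ⊆ (Icc m j).erase j := by
    intro x hx
    obtain ⟨hmx, hxj⟩ := mem_Icc.1 (mem_filter.1 hx).2
    have hxj' : blockMin π x < j := by
      refine hxj.lt_of_ne fun h => ?_
      rw [← h, hidem] at hm
      exact absurd hmx (not_le.2 hm)
    refine mem_erase.2 ⟨?_, mem_Icc.2 ⟨hmx.trans (blockMin_le π x), ?_⟩⟩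
    · rintro rfl; exact (hm.trans_le hmx).ne rfl
    · by_contra! hjx
      exact (hm.trans_le hmx).ne (by simpa only [hidem] using
        hπ.blockMin_eq_of_lt_of_lt_of_lt (hm.trans_le hmx) hxj' hjx (hidem j) (hidem x))
  have := card_le_card hsub
  rw [card_erase_of_mem (mem_Icc.2 ⟨hmj, le_rfl⟩), Fin.card_Icc] at this
  omega

lemma IsNCPartition.ballotMin_fiberCard_blockMin :
    ballotMin (fiberCard (blockMin π)) = blockMin π := by
  have hs := (isParkingFunction_iff_isBallot _).1 (isParkingFunction_blockMin π)
  funext j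
  refine le_antisymm ?_ (le_ballotMin (hπ.coversInterval_blockMin j))
  by_contra! hlt
  exact hπ.not_coversInterval_of_blockMin_lt hlt (coversInterval_ballotMin hs j)

end NCPartition

section BallotPartition

variable {s : Fin n → ℕ} (hs : IsBallot s)
include hs

lemma ballotMin_eq_of_lt_of_lt_of_lt {a b c d : Fin n} (hab : a < b) (hbc : b < c) (hcd : c < d)
    (hac : ballotMin s a = ballotMin s c) (hbd : ballotMin s b = ballotMin s d) :
    ballotMin s a = ballotMin s b := by
  refine le_antisymm ?_ ?_
  · rw [hac]
    exact le_ballotMin_of_le_of_le hs (hac ▸ (ballotMin_le hs a).trans hab.le) hbc.le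
  · rw [hbd, hac]
    exact le_ballotMin_of_le_of_le hs (hbd ▸ (ballotMin_le hs b).trans hbc.le) hcd.le

lemma isNCPartition_partitionOfFibers_ballotMin :
    IsNCPartition n (partitionOfFibers (ballotMin s)) :=
  isNCPartition_partitionOfFibers fun _ _ _ _ => ballotMin_eq_of_lt_of_lt_of_lt hs

lemma blockMin_partitionOfFibers_ballotMin :
    blockMin (partitionOfFibers (ballotMin s)) = ballotMin s :=
  blockMin_partitionOfFibers (ballotMin_le hs) (ballotMin_ballotMin hs)

end BallotPartition

lemma IsNCPartition.isParkingFunction_and_partitionOfFibers_eq_iff {π : Finset (Finset (Fin n))}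
    (hπ : IsNCPartition n π) (f : Fin n → Fin n) :
    IsParkingFunction f ∧ partitionOfFibers (ballotMin (fiberCard f)) = π ↔
      fiberCard f = fiberCard (blockMin π) := by
  constructor
  · rintro ⟨hf, rfl⟩
    have hs := (isParkingFunction_iff_isBallot f).1 hf
    rw [blockMin_partitionOfFibers_ballotMin hs, fiberCard_ballotMin hs (by simp [sum_fiberCard])]
  · intro h
    have hs := (isParkingFunction_iff_isBallot _).1 (isParkingFunction_blockMin π)
    refine ⟨(isParkingFunction_iff_isBallot f).2 (h ▸ hs), ?_⟩
    rw [h, hπ.ballotMin_fiberCard_blockMin, partitionOfFibers_blockMin hπ.2.1 hπ.1]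

lemma card_fiberCard_eq_fiberCard_blockMin {π : Finset (Finset (Fin n))} (hne : ∀ B ∈ π, B.Nonempty)
    (hπ : ∀ a, ∃! B, B ∈ π ∧ a ∈ B) :
    #{f : Fin n → Fin n | fiberCard f = fiberCard (blockMin π)} = n ! / ∏ B ∈ π, (#B)! := by
  have hprod : ∏ B ∈ π, (#B)! = ∏ j, (fiberCard (blockMin π) j)! := by
    conv_lhs => rw [← partitionOfFibers_blockMin hπ hne]
    exact prod_partitionOfFibers _ _ rfl
  have hcount := card_fiberCard_eq_mul_prod_factorial (blockMin π)
  rw [Fintype.card_fin] at hcount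
  rw [hprod, ← hcount, Nat.mul_div_cancel _ (prod_pos fun j _ => Nat.factorial_pos _)]

theorem stmt12_general (n : ℕ) :
    (n + 1) ^ (n - 1) =
      ∑ᶠ π ∈ {π : Finset (Finset (Fin n)) | IsNCPartition n π},
        (Nat.factorial n) / ∏ B ∈ π, Nat.factorial B.card := by
  classical
  have hmaps : ∀ f ∈ ({f | IsParkingFunction f} : Finset (Fin n → Fin n)),
      partitionOfFibers (ballotMin (fiberCard f)) ∈ ({π | IsNCPartition n π} : Finset _) := by
    intro f hf
    simpa using isNCPartition_partitionOfFibers_ballotMin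
      ((isParkingFunction_iff_isBallot f).1 (mem_filter.1 hf).2)
  rw [← coe_filter_univ, finsum_mem_coe_finset, ← card_parkingFunctions,
    card_eq_sum_card_fiberwise hmaps]
  refine sum_congr rfl fun π hπ => ?_
  rw [mem_filter] at hπ
  rw [filter_filter, ← card_fiberCard_eq_fiberCard_blockMin hπ.2.1 hπ.2.2.1]
  simp_rw [hπ.2.isParkingFunction_and_partitionOfFibers_eq_iff]

/-- `(n+1)^(n-1) = Σ_π n! / ∏_{B ∈ π} |B|!`, the sum over all non-crossing
partitions `π` of `{1,…,n}`. -/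
theorem stmt12 (n : ℕ) (hn : 1 ≤ n) :
    (n + 1) ^ (n - 1) =
      ∑ᶠ π ∈ {π : Finset (Finset (Fin n)) | IsNCPartition n π},
        (Nat.factorial n) / ∏ B ∈ π, Nat.factorial B.card :=
  stmt12_general n
end

section
/- Let G = ([n], E) be a finite simple graph with n ≥ 3. For an acyclic orientation O of G and a vertex v ∈ [n], let O^v be the orientation of G given by O^v(e) = O(e) for every edge e ∈ E with v ∉ e, and O^v({u,v}) = (u,v) for every edge {u,v} ∈ E incident to v. Then: (a) O^v is an acyclic orientation of G for every acyclic orientation O and every v ∈ [n]; and (b) for every acyclic orientation O' of G, Σ_{O} e(O) · |{ v ∈ [n] : O^v = O' }| = n · e(O'), where the sum runs over all acyclic orientations O of G. (Statement (b) expresses that the distribution assigning probability e(O)/n! to each acyclic orientation O is stationary for the Card-Shuffling Markov chain, whose transition from O picks v ∈ [n] uniformly and moves to O^v.) -/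
open scoped Classical

/-- `O` is an orientation of `G` (Boolean-valued, to allow finite enumeration). -/
def IsOrientationB {n : ℕ} (G : SimpleGraph (Fin n)) (O : Fin n → Fin n → Bool) : Prop :=
  (∀ u v, O u v = true → G.Adj u v) ∧ ∀ u v, G.Adj u v → O u v = !O v u

/-- The Boolean relation `O` has no directed cycles. -/
def IsAcyclicB {n : ℕ} (O : Fin n → Fin n → Bool) : Prop :=
  ∀ v, ¬ Relation.TransGen (fun a b => O a b = true) v v

/-- The number `e(O)` of linear extensions of the orientation `O`: bijections
`f : [n] → [n]` with `f u < f v` whenever `O` orients an edge as `(u,v)`. -/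
noncomputable def linextCount (n : ℕ) (O : Fin n → Fin n → Bool) : ℕ :=
  Nat.card {f : Equiv.Perm (Fin n) // ∀ u v, O u v = true → f u < f v}

/-- `O^v`: every edge incident to `v` is oriented towards `v`; all other edges keep
their orientation from `O`. -/
def shiftOr {n : ℕ} (G : SimpleGraph (Fin n)) [DecidableRel G.Adj]
    (O : Fin n → Fin n → Bool) (v : Fin n) : Fin n → Fin n → Bool :=
  fun x y => if y = v then decide (G.Adj x v) else if x = v then false else O x y

/-!
A ranking `f` of the vertices induces the acyclic orientation from lower to higher rank, and an
acyclic orientation `O` is induced by exactly its `e(O)` linear extensions. So the left-hand side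
of (b) counts the pairs `(f, v)` with `(O_f)^v = O'`. Orienting every edge at `v` towards `v` is
the same as moving `v` to the top of the ranking, and `(f, v) ↦ (f with v moved to the top,
old rank of v)` is a bijection of `Perm (Fin n) × Fin n`. Hence the pairs are counted by `n`
times the number of rankings inducing `O'`, that is by `n · e(O')`.
-/

open Finset

section Orientation

variable {n : ℕ} {G : SimpleGraph (Fin n)} [DecidableRel G.Adj] {O : Fin n → Fin n → Bool}

def inducedOr (G : SimpleGraph (Fin n)) [DecidableRel G.Adj] (f : Equiv.Perm (Fin n)) :
    Fin n → Fin n → Bool :=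
  fun x y => decide (G.Adj x y ∧ f x < f y)

lemma isOrientationB_inducedOr (f : Equiv.Perm (Fin n)) : IsOrientationB G (inducedOr G f) := by
  refine ⟨fun u v h => (of_decide_eq_true h).1, fun u v huv => ?_⟩
  have hne : f u ≠ f v := f.injective.ne (G.ne_of_adj huv)
  rcases hne.lt_or_gt with h | h <;> simp [inducedOr, huv, huv.symm, h, h.not_gt]

lemma isAcyclicB_of_forall_lt (f : Equiv.Perm (Fin n))
    (hf : ∀ u v, O u v = true → f u < f v) : IsAcyclicB O := by
  intro v hv
  have hlt : Relation.TransGen (· < ·) (f v) (f v) := hv.lift f hf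
  rw [Relation.transGen_eq_self] at hlt
  exact lt_irrefl _ hlt

lemma isAcyclicB_inducedOr (f : Equiv.Perm (Fin n)) : IsAcyclicB (inducedOr G f) :=
  isAcyclicB_of_forall_lt f fun _ _ h => (of_decide_eq_true h).2

omit [DecidableRel G.Adj] in
lemma IsOrientationB.eq_false_of_not_adj (hO : IsOrientationB G O) {x y : Fin n}
    (h : ¬ G.Adj x y) : O x y = false :=
  Bool.eq_false_iff.2 fun hxy => h (hO.1 x y hxy)

lemma IsOrientationB.inducedOr_eq_iff (hO : IsOrientationB G O) (f : Equiv.Perm (Fin n)) :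
    inducedOr G f = O ↔ ∀ u v, O u v = true → f u < f v := by
  constructor
  · rintro rfl u v h
    exact (of_decide_eq_true h).2
  · intro hf
    funext x y
    by_cases hxy : G.Adj x y
    · cases hO' : O x y
      · have hyx : O y x = true := by simpa [hO'] using hO.2 y x hxy.symm
        simp [inducedOr, (hf y x hyx).not_gt]
      · simpa [inducedOr, hxy] using hf x y hO'
    · simp [inducedOr, hxy, hO.eq_false_of_not_adj hxy]

lemma IsOrientationB.linextCount_eq (hO : IsOrientationB G O) :
    linextCount n O = #{f : Equiv.Perm (Fin n) | inducedOr G f = O} := by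
  simp_rw [linextCount, Nat.card_eq_fintype_card, Fintype.card_subtype, hO.inducedOr_eq_iff]

end Orientation

section Shift

variable {n : ℕ} {G : SimpleGraph (Fin n)} [DecidableRel G.Adj] {O : Fin n → Fin n → Bool}

lemma IsOrientationB.isOrientationB_shiftOr (hO : IsOrientationB G O) (v : Fin n) :
    IsOrientationB G (shiftOr G O v) := by
  refine ⟨fun x y h => ?_, fun x y hxy => ?_⟩
  · unfold shiftOr at h
    split_ifs at h with hy hx
    · exact hy ▸ of_decide_eq_true h
    · exact hO.1 x y h
  · have hne := G.ne_of_adj hxy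
    unfold shiftOr
    split_ifs <;> simp_all [hO.2 x y hxy, G.adj_comm]

lemma shiftOr_eq_true {v x y : Fin n} (h : shiftOr G O v x y = true) :
    x ≠ v ∧ (y = v ∨ O x y = true) := by
  unfold shiftOr at h
  split_ifs at h with hy hx
  · exact ⟨G.ne_of_adj (of_decide_eq_true h), Or.inl hy⟩
  · exact ⟨hx, Or.inr h⟩

lemma IsAcyclicB.isAcyclicB_shiftOr (hA : IsAcyclicB O) (v : Fin n) :
    IsAcyclicB (shiftOr G O v) := by
  have key : ∀ a b, Relation.TransGen (fun a b => shiftOr G O v a b = true) a b →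
      a ≠ v ∧ (b = v ∨ Relation.TransGen (fun a b => O a b = true) a b) := by
    intro a b h
    induction h with
    | single h => exact ⟨(shiftOr_eq_true h).1, (shiftOr_eq_true h).2.imp_right .single⟩
    | tail _ hbc ih =>
      obtain ⟨hbv, hc⟩ := shiftOr_eq_true hbc
      exact ⟨ih.1, hc.imp_right (ih.2.resolve_left hbv).tail⟩
  intro w hw
  obtain ⟨hwv, hw'⟩ := key w w hw
  exact hA w (hw'.resolve_left hwv)

end Shift

section MoveToTop

variable {m : ℕ}

def toTop (k : Fin (m + 1)) : Equiv.Perm (Fin (m + 1)) :=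
  (finSuccEquiv' k).trans finSuccEquivLast.symm

@[simp]
lemma toTop_self (k : Fin (m + 1)) : toTop k k = Fin.last m := by
  simp [toTop]

@[simp]
lemma toTop_succAbove (k : Fin (m + 1)) (i : Fin m) : toTop k (k.succAbove i) = i.castSucc := by
  simp [toTop]

@[simp]
lemma toTop_symm_last (k : Fin (m + 1)) : (toTop k).symm (Fin.last m) = k :=
  (Equiv.symm_apply_eq _).2 (toTop_self k).symm

lemma toTop_lt_toTop_iff {k x y : Fin (m + 1)} (hx : x ≠ k) (hy : y ≠ k) :
    toTop k x < toTop k y ↔ x < y := by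
  obtain ⟨i, rfl⟩ := Fin.exists_succAbove_eq hx
  obtain ⟨j, rfl⟩ := Fin.exists_succAbove_eq hy
  simp [Fin.succAbove_lt_succAbove_iff]

lemma toTop_lt_last {k x : Fin (m + 1)} (hx : x ≠ k) : toTop k x < Fin.last m := by
  obtain ⟨i, rfl⟩ := Fin.exists_succAbove_eq hx
  simp [Fin.castSucc_lt_last]

def moveToTop (f : Equiv.Perm (Fin (m + 1))) (v : Fin (m + 1)) : Equiv.Perm (Fin (m + 1)) :=
  f.trans (toTop (f v))

lemma moveToTop_apply_self (f : Equiv.Perm (Fin (m + 1))) (v : Fin (m + 1)) :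
    moveToTop f v v = Fin.last m := by
  simp [moveToTop]

lemma moveToTop_lt_last {f : Equiv.Perm (Fin (m + 1))} {v x : Fin (m + 1)} (hx : x ≠ v) :
    moveToTop f v x < Fin.last m :=
  toTop_lt_last (f.injective.ne hx)

lemma moveToTop_lt_moveToTop_iff {f : Equiv.Perm (Fin (m + 1))} {v x y : Fin (m + 1)}
    (hx : x ≠ v) (hy : y ≠ v) : moveToTop f v x < moveToTop f v y ↔ f x < f y :=
  toTop_lt_toTop_iff (f.injective.ne hx) (f.injective.ne hy)

def moveToTopEquiv :
    Equiv.Perm (Fin (m + 1)) × Fin (m + 1) ≃ Equiv.Perm (Fin (m + 1)) × Fin (m + 1) where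
  toFun p := (moveToTop p.1 p.2, p.1 p.2)
  invFun q := (q.1.trans (toTop q.2).symm, q.1.symm (Fin.last m))
  left_inv := by
    rintro ⟨f, v⟩
    ext : 1
    · ext x; simp [moveToTop]
    · simp [Equiv.symm_apply_eq, moveToTop_apply_self]
  right_inv := by
    rintro ⟨g, k⟩
    ext : 1
    · ext x; simp [moveToTop]
    · simp

lemma card_filter_moveToTop (P : Equiv.Perm (Fin (m + 1)) → Prop) [DecidablePred P] :
    #{p : Equiv.Perm (Fin (m + 1)) × Fin (m + 1) | P (moveToTop p.1 p.2)} =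
      (m + 1) * #{g | P g} := by
  rw [← Fintype.card_subtype, Fintype.card_congr
    (moveToTopEquiv.subtypeEquiv (p := fun p => P (moveToTop p.1 p.2)) (q := fun q => P q.1)
      fun _ => Iff.rfl),
    Fintype.card_subtype, ← univ_product_univ, filter_product_left, card_product, card_univ,
    Fintype.card_fin, mul_comm]

end MoveToTop

section Stationary

variable {m : ℕ} {G : SimpleGraph (Fin (m + 1))} [DecidableRel G.Adj]

lemma shiftOr_inducedOr (f : Equiv.Perm (Fin (m + 1))) (v : Fin (m + 1)) :
    shiftOr G (inducedOr G f) v = inducedOr G (moveToTop f v) := by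
  funext x y
  unfold shiftOr inducedOr
  split_ifs with hy hx
  · subst hy
    by_cases hxy : G.Adj x y
    · simp [hxy, moveToTop_apply_self, moveToTop_lt_last (G.ne_of_adj hxy)]
    · simp [hxy]
  · subst hx
    simp [moveToTop_apply_self, (Fin.le_last _).not_gt]
  · simp [moveToTop_lt_moveToTop_iff hx hy]

theorem sum_linextCount_mul_card_shiftOr (O' : Fin (m + 1) → Fin (m + 1) → Bool)
    (hO' : IsOrientationB G O') :
    ∑ O ∈ univ.filter (fun O : Fin (m + 1) → Fin (m + 1) → Bool =>
        IsOrientationB G O ∧ IsAcyclicB O),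
      linextCount (m + 1) O * #{v | shiftOr G O v = O'} = (m + 1) * linextCount (m + 1) O' :=
  calc _ = ∑ O ∈ univ.filter (fun O : Fin (m + 1) → Fin (m + 1) → Bool =>
          IsOrientationB G O ∧ IsAcyclicB O),
        ∑ f ∈ univ.filter (fun f => inducedOr G f = O),
          #{v | shiftOr G (inducedOr G f) v = O'} := by
        refine sum_congr rfl fun O hO => ?_
        rw [(mem_filter.1 hO).2.1.linextCount_eq, ← smul_eq_mul, ← sum_const]
        exact sum_congr rfl fun f hf => by rw [(mem_filter.1 hf).2]
    _ = ∑ f, #{v | shiftOr G (inducedOr G f) v = O'} :=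
        sum_fiberwise_of_maps_to (fun f _ =>
          mem_filter.2 ⟨mem_univ _, isOrientationB_inducedOr f, isAcyclicB_inducedOr f⟩) _
    _ = #{p : Equiv.Perm (Fin (m + 1)) × Fin (m + 1) | shiftOr G (inducedOr G p.1) p.2 = O'} := by
        rw [card_filter, ← univ_product_univ, sum_product]
        simp only [card_filter]
    _ = (m + 1) * linextCount (m + 1) O' := by
        simp only [shiftOr_inducedOr]
        rw [card_filter_moveToTop (inducedOr G · = O'), hO'.linextCount_eq]

end Stationary

theorem stmt13_general (n : ℕ) (G : SimpleGraph (Fin n)) [DecidableRel G.Adj] :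
    (∀ (O : Fin n → Fin n → Bool) (v : Fin n),
      IsOrientationB G O → IsAcyclicB O →
        IsOrientationB G (shiftOr G O v) ∧ IsAcyclicB (shiftOr G O v)) ∧
    (∀ O' : Fin n → Fin n → Bool, IsOrientationB G O' → IsAcyclicB O' →
      ∑ O ∈ Finset.univ.filter
          (fun O : Fin n → Fin n → Bool => IsOrientationB G O ∧ IsAcyclicB O),
        linextCount n O *
          (Finset.univ.filter (fun v : Fin n => shiftOr G O v = O')).card =
        n * linextCount n O') := by
  refine ⟨fun O v hO hA => ⟨hO.isOrientationB_shiftOr v, hA.isAcyclicB_shiftOr v⟩,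
    fun O' hO' _ => ?_⟩
  rcases n with _ | m
  · simp
  · exact_mod_cast sum_linextCount_mul_card_shiftOr O' hO'

/-- (a) `O^v` is an acyclic orientation whenever `O` is; (b) the distribution
`O ↦ e(O)/n!` is stationary for the Card-Shuffling Markov chain, i.e.
`Σ_O e(O)·|{v : O^v = O'}| = n·e(O')` for every acyclic orientation `O'`. -/
theorem stmt13 (n : ℕ) (hn : 3 ≤ n) (G : SimpleGraph (Fin n)) [DecidableRel G.Adj] :
    (∀ (O : Fin n → Fin n → Bool) (v : Fin n),
      IsOrientationB G O → IsAcyclicB O →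
        IsOrientationB G (shiftOr G O v) ∧ IsAcyclicB (shiftOr G O v)) ∧
    (∀ O' : Fin n → Fin n → Bool, IsOrientationB G O' → IsAcyclicB O' →
      ∑ O ∈ Finset.univ.filter
          (fun O : Fin n → Fin n → Bool => IsOrientationB G O ∧ IsAcyclicB O),
        linextCount n O *
          (Finset.univ.filter (fun v : Fin n => shiftOr G O v = O')).card =
        n * linextCount n O') :=
  stmt13_general n G
end

section
/- Let G = ([n], E) be a finite simple graph, O an acyclic orientation of G, and let ≤_O denote the reflexive-transitive closure of the directed-edge relation of O (so x ≤_O y iff there is a directed path from x to y in O). Suppose {u,v} ∈ E with (u,v) a directed edge of O, and let O' be the orientation of G obtained from O by reversing only that edge: O'({u,v}) = (v,u) and O'(e) = O(e) for all other edges e ∈ E. Then O' is acyclic if and only if v covers u in ([n], ≤_O), i.e. u ≤_O v, u ≠ v, and there is no w ∉ {u,v} with u ≤_O w and w ≤_O v. -/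
/-- `O` is an orientation of `G`. -/
def IsOrientation {V : Type*} (G : SimpleGraph V) (O : V → V → Prop) : Prop :=
  (∀ u v, O u v → G.Adj u v) ∧ ∀ u v, G.Adj u v → (O u v ↔ ¬ O v u)

/-- The relation `O` has no directed cycles. -/
def IsAcyclicRel {V : Type*} (O : V → V → Prop) : Prop :=
  ∀ v, ¬ Relation.TransGen O v v

/-!
Let `O⁻` be `O` with the arrow `(u,v)` removed, so that the reversed orientation is `O⁻` plus
the arrow `(v,u)`. A directed cycle of the reversed orientation must use `(v,u)`, since `O` is
acyclic, and the rest of it is an `O⁻`-path from `u` to `v`; conversely such a path closes a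
cycle with `(v,u)`. An `O⁻`-path from `u` to `v` starts with an arrow `(u,w)`, `w ≠ v`, so `w`
lies strictly between `u` and `v`. Conversely, if `u <_O w <_O v`, then by acyclicity no
`O`-path from `u` to `w` enters `v` and no `O`-path from `w` to `v` leaves `u`, so both avoid
the arrow `(u,v)`.
-/

open Relation

section

variable {V : Type*}

def removeArrow (r : V → V → Prop) (u v : V) : V → V → Prop :=
  fun x y => r x y ∧ ¬ (x = u ∧ y = v)

def reverseArrow (r : V → V → Prop) (u v : V) : V → V → Prop :=
  fun x y => (x = v ∧ y = u) ∨ removeArrow r u v x y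

variable {r : V → V → Prop} {u v : V}

lemma removeArrow_le : removeArrow r u v ≤ r := fun _ _ h => h.1

lemma removeArrow_le_reverseArrow : removeArrow r u v ≤ reverseArrow r u v := fun _ _ => Or.inr

/-- Along a path of the reversed relation, the part after the last use of `(v,u)` avoids it. -/
lemma reflTransGen_removeArrow_or_of_reverseArrow {a b : V}
    (h : ReflTransGen (reverseArrow r u v) a b) :
    ReflTransGen (removeArrow r u v) a b ∨
      (ReflTransGen (reverseArrow r u v) a v ∧ ReflTransGen (removeArrow r u v) u b) := by
  induction h with
  | refl => exact Or.inl .refl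
  | tail hab hbc ih =>
    rcases hbc with ⟨rfl, rfl⟩ | hbc
    · exact Or.inr ⟨hab, .refl⟩
    · rcases ih with h | ⟨hav, hub⟩
      · exact Or.inl (h.tail hbc)
      · exact Or.inr ⟨hav, hub.tail hbc⟩

namespace IsAcyclicRel

lemma ne_of_rel (hr : IsAcyclicRel r) (huv : r u v) : u ≠ v := by
  rintro rfl
  exact hr u (.single huv)

lemma reflTransGen_removeArrow_of_transGen_right {a w : V} (hr : IsAcyclicRel r)
    (hwv : TransGen r w v) (h : ReflTransGen r a w) :
    ReflTransGen (removeArrow r u v) a w := by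
  induction h using ReflTransGen.head_induction_on with
  | refl => exact .refl
  | head hac hcw ih =>
    refine .head ⟨hac, ?_⟩ ih
    rintro ⟨-, rfl⟩
    exact hr _ (TransGen.trans_right hcw hwv)

lemma reflTransGen_removeArrow_of_transGen_left {w b : V} (hr : IsAcyclicRel r)
    (huw : TransGen r u w) (h : ReflTransGen r w b) :
    ReflTransGen (removeArrow r u v) w b := by
  induction h with
  | refl => exact .refl
  | tail hwc hcb ih =>
    refine ih.tail ⟨hcb, ?_⟩
    rintro ⟨rfl, -⟩
    exact hr _ (huw.trans_left hwc)

lemma reflTransGen_removeArrow_of_transGen_reverseArrow {x : V} (hr : IsAcyclicRel r)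
    (h : TransGen (reverseArrow r u v) x x) :
    ReflTransGen (removeArrow r u v) u v := by
  obtain ⟨y, hxy, hyx⟩ := TransGen.head'_iff.mp h
  rcases hxy with ⟨rfl, rfl⟩ | hxy
  · rcases reflTransGen_removeArrow_or_of_reverseArrow hyx with h | ⟨-, h⟩ <;> exact h
  · rcases reflTransGen_removeArrow_or_of_reverseArrow hyx with hyx | ⟨hyv, hux⟩
    · exact absurd (TransGen.mono removeArrow_le _ _ (TransGen.head' hxy hyx)) (hr x)
    · rcases reflTransGen_removeArrow_or_of_reverseArrow hyv with h | ⟨-, h⟩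
      · exact (hux.tail hxy).trans h
      · exact h

lemma isAcyclicRel_reverseArrow_iff (hr : IsAcyclicRel r) :
    IsAcyclicRel (reverseArrow r u v) ↔ ¬ ReflTransGen (removeArrow r u v) u v := by
  refine ⟨fun hrev huv => hrev v ?_, fun h x hx => h ?_⟩
  · exact TransGen.head' (Or.inl ⟨rfl, rfl⟩) (ReflTransGen.mono removeArrow_le_reverseArrow _ _ huv)
  · exact hr.reflTransGen_removeArrow_of_transGen_reverseArrow hx

lemma reflTransGen_removeArrow_iff (hr : IsAcyclicRel r) (huv : u ≠ v) :
    ReflTransGen (removeArrow r u v) u v ↔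
      ∃ w, w ≠ u ∧ w ≠ v ∧ ReflTransGen r u w ∧ ReflTransGen r w v := by
  constructor
  · intro h
    rcases h.cases_head with rfl | ⟨w, huw, hwv⟩
    · exact absurd rfl huv
    · exact ⟨w, (hr.ne_of_rel huw.1).symm, fun h => huw.2 ⟨rfl, h⟩, .single huw.1,
        ReflTransGen.mono removeArrow_le _ _ hwv⟩
  · rintro ⟨w, hwu, hwv, huw, hwv'⟩
    have huw_strict : TransGen r u w :=
      (reflTransGen_iff_eq_or_transGen.mp huw).resolve_left hwu
    have hwv_strict : TransGen r w v :=
      (reflTransGen_iff_eq_or_transGen.mp hwv').resolve_left hwv.symm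
    exact (hr.reflTransGen_removeArrow_of_transGen_right hwv_strict huw).trans
      (hr.reflTransGen_removeArrow_of_transGen_left huw_strict hwv')

end IsAcyclicRel

end

theorem stmt15_general (n : ℕ) (O : Fin n → Fin n → Prop)
    (hacyc : IsAcyclicRel O)
    (u v : Fin n) (huv : O u v) :
    IsAcyclicRel (fun x y => (x = v ∧ y = u) ∨ (O x y ∧ ¬ (x = u ∧ y = v))) ↔
      (Relation.ReflTransGen O u v ∧ u ≠ v ∧
        ∀ w, w ≠ u → w ≠ v →
          ¬ (Relation.ReflTransGen O u w ∧ Relation.ReflTransGen O w v)) := by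
  have hne : u ≠ v := hacyc.ne_of_rel huv
  change IsAcyclicRel (reverseArrow O u v) ↔ _
  rw [hacyc.isAcyclicRel_reverseArrow_iff, hacyc.reflTransGen_removeArrow_iff hne]
  push Not
  exact ⟨fun h => ⟨.single huv, hne, h⟩, fun h => h.2.2⟩

/-- reversing the single directed edge `(u,v)` of an acyclic orientation `O`
yields an acyclic orientation iff `v` covers `u` in the induced partial order `≤_O`
(the reflexive-transitive closure of `O`). -/
theorem stmt15 (n : ℕ) (G : SimpleGraph (Fin n)) (O : Fin n → Fin n → Prop)
    (hO : IsOrientation G O) (hacyc : IsAcyclicRel O)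
    (u v : Fin n) (hE : G.Adj u v) (huv : O u v) :
    IsAcyclicRel (fun x y => (x = v ∧ y = u) ∨ (O x y ∧ ¬ (x = u ∧ y = v))) ↔
      (Relation.ReflTransGen O u v ∧ u ≠ v ∧
        ∀ w, w ≠ u → w ≠ v →
          ¬ (Relation.ReflTransGen O u w ∧ Relation.ReflTransGen O w v)) :=
  stmt15_general n O hacyc u v huv
end

section
/- Let G = (V, E) be a finite simple graph, O an acyclic orientation of G, and ≤_O the reflexive-transitive closure of the directed-edge relation of O (write x <_O y for x ≤_O y and x ≠ y). Given {u,v} ∈ E with (u,v) a directed edge of O, define the orientation O_{{u,v}} of G as follows: for each edge e = {x,y} ∈ E with (x,y) a directed edge of O, set O_{{u,v}}(e) = (y,x) if u ≤_O x, x <_O y, and y ≤_O v, and set O_{{u,v}}(e) = (x,y) otherwise. Then: (a) O_{{u,v}} is an acyclic orientation of G; (b) applying the operation again to the same edge recovers O, i.e. (O_{{u,v}})_{{u,v}} = O; and (c) for edges e_1, e_2 ∈ E, if O_{e_1} = O_{e_2} then e_1 = e_2. -/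
/-- The condition under which a directed edge `(x,y)` of `O` gets reversed in the interval
reversal indexed by `(u,v)`: `u ≤_O x`, `x <_O y` and `y ≤_O v`. -/
def irCond {V : Type*} (O : V → V → Prop) (u v x y : V) : Prop :=
  Relation.ReflTransGen O u x ∧ (Relation.ReflTransGen O x y ∧ x ≠ y) ∧
    Relation.ReflTransGen O y v

/-- The interval reversal `O_{{u,v}}` of an orientation `O` of a graph: each directed edge
`(x,y)` of `O` with `u ≤_O x`, `x <_O y`, `y ≤_O v` is reversed, and all other edges keep
their orientation. -/
def intervalReversal {V : Type*} (O : V → V → Prop) (u v : V) : V → V → Prop :=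
  fun a b => (O a b ∧ ¬ irCond O u v a b) ∨ (O b a ∧ irCond O u v b a)

/-!
Write `≤` for `≤_O` and `O'` for `intervalReversal O u v`. The up-set of `u` is closed under
`O'`-steps, the down-set of `v` under backward `O'`-steps, outside the down-set of `v` (or the
up-set of `u`) `O'` agrees with `O`, and an `O'`-step from above `u` to below `v` is a
reversed `O`-edge. So an `O'`-cycle is an `O`-cycle read forwards or backwards, and the
`O'`-paths running from `v` to `u` are exactly the reversed `O`-paths in `[u, v]`; the latter
makes the reversal condition of `O'` at `(v, u)` the swap of that of `O` at `(u, v)`, which gives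
the involution. Finally the reversal indexed by `(u₂, v₂)` reverses an edge `(u₁, v₁)` only if
`u₂ ≤ u₁` and `v₁ ≤ v₂`; since it reverses `(u₂, v₂)` itself, equal reversals have equal
indexing edges by antisymmetry.
-/

open Relation

namespace Relation

variable {α : Type*} {r s : α → α → Prop} {P Q : α → Prop} {a b : α}

theorem ReflTransGen.forward_closed (hP : ∀ {a b}, r a b → P a → P b)
    (h : ReflTransGen r a b) (ha : P a) : P b := by
  induction h with
  | refl => exact ha
  | tail _ hbc ih => exact hP hbc ih

theorem ReflTransGen.backward_closed (hQ : ∀ {a b}, r a b → Q b → Q a)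
    (h : ReflTransGen r a b) (hb : Q b) : Q a :=
  (reflTransGen_swap.2 h).forward_closed hQ hb

theorem TransGen.mono_of_closed (hP : ∀ {a b}, r a b → P a → P b)
    (hQ : ∀ {a b}, r a b → Q b → Q a) (hs : ∀ {a b}, r a b → P a → Q b → s a b)
    (h : TransGen r a b) (ha : P a) (hb : Q b) : TransGen s a b := by
  induction h with
  | single hab => exact .single (hs hab ha hb)
  | tail hac hcb ih =>
    exact (ih (hQ hcb hb)).tail (hs hcb (hac.to_reflTransGen.forward_closed hP ha) hb)

theorem ReflTransGen.mono_of_closed (hP : ∀ {a b}, r a b → P a → P b)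
    (hQ : ∀ {a b}, r a b → Q b → Q a) (hs : ∀ {a b}, r a b → P a → Q b → s a b)
    (h : ReflTransGen r a b) (ha : P a) (hb : Q b) : ReflTransGen s a b := by
  induction h with
  | refl => exact .refl
  | tail hac hcb ih =>
    exact (ih (hQ hcb hb)).tail (hs hcb (hac.forward_closed hP ha) hb)

end Relation

section IntervalReversal

variable {V : Type*} {O : V → V → Prop} {u v a b : V}

namespace IsAcyclicRel

theorem ne (hacyc : IsAcyclicRel O) (h : O a b) : a ≠ b :=
  fun hab => hacyc b (.single (hab ▸ h))

theorem transGen_asymm (hacyc : IsAcyclicRel O) (hab : TransGen O a b) : ¬ TransGen O b a :=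
  fun hba => hacyc a (hab.trans hba)

theorem antisymm (hacyc : IsAcyclicRel O) (hab : ReflTransGen O a b)
    (hba : ReflTransGen O b a) : a = b := by
  rcases reflTransGen_iff_eq_or_transGen.1 hab with rfl | hab
  · rfl
  rcases reflTransGen_iff_eq_or_transGen.1 hba with rfl | hba
  · rfl
  exact absurd hba (hacyc.transGen_asymm hab)

end IsAcyclicRel

theorem irCond.transGen (h : irCond O u v a b) : TransGen O a b :=
  (reflTransGen_iff_eq_or_transGen.1 h.2.1.1).resolve_left h.2.1.2.symm

theorem irCond_of_mem_interval (hacyc : IsAcyclicRel O) (hab : O a b)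
    (ha : ReflTransGen O u a) (hb : ReflTransGen O b v) : irCond O u v a b :=
  ⟨ha, ⟨.single hab, hacyc.ne hab⟩, hb⟩

theorem IsOrientation.intervalReversal {G : SimpleGraph V} (hO : IsOrientation G O) (u v : V) :
    IsOrientation G (intervalReversal O u v) := by
  refine ⟨?_, fun a b hadj => ?_⟩
  · rintro a b (⟨hab, -⟩ | ⟨hba, -⟩)
    exacts [hO.1 a b hab, (hO.1 b a hba).symm]
  · have := hO.2 a b hadj
    unfold _root_.intervalReversal
    tauto

theorem reflTransGen_left_of_intervalReversal (h : intervalReversal O u v a b)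
    (ha : ReflTransGen O u a) : ReflTransGen O u b := by
  rcases h with ⟨hab, -⟩ | ⟨-, hub, -⟩
  exacts [ha.tail hab, hub]

theorem reflTransGen_right_of_intervalReversal (h : intervalReversal O u v a b)
    (hb : ReflTransGen O b v) : ReflTransGen O a v := by
  rcases h with ⟨hab, -⟩ | ⟨-, -, -, hav⟩
  exacts [hb.head hab, hav]

theorem of_intervalReversal_of_not_reflTransGen_right (h : intervalReversal O u v a b)
    (ha : ¬ ReflTransGen O a v) : O a b := by
  rcases h with ⟨hab, -⟩ | ⟨-, -, -, hav⟩
  exacts [hab, absurd hav ha]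

theorem of_intervalReversal_of_not_reflTransGen_left (h : intervalReversal O u v a b)
    (hb : ¬ ReflTransGen O u b) : O a b := by
  rcases h with ⟨hab, -⟩ | ⟨-, hub, -⟩
  exacts [hab, absurd hub hb]

theorem swap_of_intervalReversal_of_mem_interval (hacyc : IsAcyclicRel O)
    (h : intervalReversal O u v a b) (ha : ReflTransGen O u a) (hb : ReflTransGen O b v) :
    O b a := by
  rcases h with ⟨hab, hc⟩ | ⟨hba, -⟩
  exacts [absurd (irCond_of_mem_interval hacyc hab ha hb) hc, hba]

theorem intervalReversal_of_mem_interval (hacyc : IsAcyclicRel O) (hab : O a b)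
    (ha : ReflTransGen O u a) (hb : ReflTransGen O b v) : intervalReversal O u v b a :=
  .inr ⟨hab, irCond_of_mem_interval hacyc hab ha hb⟩

theorem IsAcyclicRel.intervalReversal (hacyc : IsAcyclicRel O) (u v : V) :
    IsAcyclicRel (intervalReversal O u v) := by
  intro w hw
  by_cases hwv : ReflTransGen O w v
  · by_cases huw : ReflTransGen O u w
    · exact hacyc w (transGen_swap.1 (hw.mono_of_closed (s := Function.swap O)
        (P := (ReflTransGen O u ·)) (Q := (ReflTransGen O · v))
        reflTransGen_left_of_intervalReversal reflTransGen_right_of_intervalReversal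
        (swap_of_intervalReversal_of_mem_interval hacyc) huw hwv))
    · exact hacyc w (hw.mono_of_closed (P := fun _ => True) (Q := (¬ ReflTransGen O u ·))
        (fun _ _ => trivial) (fun h => mt (reflTransGen_left_of_intervalReversal h))
        (fun h _ => of_intervalReversal_of_not_reflTransGen_left h) trivial huw)
  · exact hacyc w (hw.mono_of_closed (P := (¬ ReflTransGen O · v)) (Q := fun _ => True)
      (fun h => mt (reflTransGen_right_of_intervalReversal h)) (fun _ _ => trivial)
      (fun h ha _ => of_intervalReversal_of_not_reflTransGen_right h ha) hwv trivial)

theorem reflTransGen_intervalReversal_of_mem_interval (hacyc : IsAcyclicRel O)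
    (h : ReflTransGen O a b) (ha : ReflTransGen O u a) (hb : ReflTransGen O b v) :
    ReflTransGen (intervalReversal O u v) b a :=
  reflTransGen_swap.1 (h.mono_of_closed (s := Function.swap (intervalReversal O u v))
    (P := (ReflTransGen O u ·)) (Q := (ReflTransGen O · v)) (fun hab hua => hua.tail hab)
    (fun hab hbv => hbv.head hab) (intervalReversal_of_mem_interval hacyc) ha hb)

theorem reflTransGen_of_intervalReversal_of_mem_interval (hacyc : IsAcyclicRel O)
    (h : ReflTransGen (intervalReversal O u v) a b) (ha : ReflTransGen O u a)
    (hb : ReflTransGen O b v) : ReflTransGen O b a :=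
  reflTransGen_swap.1 (h.mono_of_closed (s := Function.swap O)
    (P := (ReflTransGen O u ·)) (Q := (ReflTransGen O · v))
    reflTransGen_left_of_intervalReversal reflTransGen_right_of_intervalReversal
    (swap_of_intervalReversal_of_mem_interval hacyc) ha hb)

theorem irCond_intervalReversal_iff (hacyc : IsAcyclicRel O) (huv : ReflTransGen O u v) :
    irCond (intervalReversal O u v) v u a b ↔ irCond O u v b a := by
  constructor
  · rintro ⟨hva, ⟨hab, hne⟩, hbu⟩
    have hua : ReflTransGen O u a :=
      hva.forward_closed (P := (ReflTransGen O u ·)) reflTransGen_left_of_intervalReversal huv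
    have hbv : ReflTransGen O b v :=
      hbu.backward_closed (Q := (ReflTransGen O · v)) reflTransGen_right_of_intervalReversal huv
    have hub : ReflTransGen O u b :=
      hab.forward_closed (P := (ReflTransGen O u ·)) reflTransGen_left_of_intervalReversal hua
    have hav : ReflTransGen O a v :=
      hab.backward_closed (Q := (ReflTransGen O · v)) reflTransGen_right_of_intervalReversal hbv
    exact ⟨hub, ⟨reflTransGen_of_intervalReversal_of_mem_interval hacyc hab hua hbv, hne.symm⟩,
      hav⟩
  · rintro ⟨hub, ⟨hba, hne⟩, hav⟩
    exact ⟨reflTransGen_intervalReversal_of_mem_interval hacyc hav (hub.trans hba) .refl,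
      ⟨reflTransGen_intervalReversal_of_mem_interval hacyc hba hub hav, hne.symm⟩,
      reflTransGen_intervalReversal_of_mem_interval hacyc hub .refl (hba.trans hav)⟩

theorem intervalReversal_intervalReversal (hacyc : IsAcyclicRel O) (huv : ReflTransGen O u v) :
    intervalReversal (intervalReversal O u v) v u = O := by
  funext a b
  apply propext
  have hab := irCond_intervalReversal_iff hacyc huv (a := a) (b := b)
  have hba := irCond_intervalReversal_iff hacyc huv (a := b) (b := a)
  have h₁ : irCond O u v a b → ¬ O b a := fun h hba => hacyc a (h.transGen.tail hba)
  have h₂ : irCond O u v b a → ¬ O a b := fun h hab => hacyc b (h.transGen.tail hab)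
  have h₃ : irCond O u v a b → ¬ irCond O u v b a :=
    fun h h' => hacyc.transGen_asymm h.transGen h'.transGen
  unfold intervalReversal at hab hba ⊢
  tauto

theorem irCond_of_intervalReversal_of_swap (hacyc : IsAcyclicRel O)
    (h : intervalReversal O u v a b) (hba : O b a) : irCond O u v b a := by
  rcases h with ⟨hab, -⟩ | ⟨-, hc⟩
  exacts [absurd ((TransGen.single hab).tail hba) (hacyc a), hc]

theorem eq_of_intervalReversal_eq (hacyc : IsAcyclicRel O) {u₁ v₁ u₂ v₂ : V}
    (h₁ : O u₁ v₁) (h₂ : O u₂ v₂)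
    (heq : intervalReversal O u₁ v₁ = intervalReversal O u₂ v₂) : u₁ = u₂ ∧ v₁ = v₂ := by
  have hc₁ := irCond_of_intervalReversal_of_swap hacyc
    (heq ▸ intervalReversal_of_mem_interval hacyc h₁ .refl .refl) h₁
  have hc₂ := irCond_of_intervalReversal_of_swap hacyc
    (heq ▸ intervalReversal_of_mem_interval hacyc h₂ .refl .refl) h₂
  exact ⟨hacyc.antisymm hc₂.1 hc₁.1, hacyc.antisymm hc₁.2.2 hc₂.2.2⟩

end IntervalReversal

theorem stmt16_general (V : Type*) (G : SimpleGraph V) (O : V → V → Prop)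
    (hO : IsOrientation G O) (hacyc : IsAcyclicRel O)
    (u v : V) (huv : O u v) :
    (IsOrientation G (intervalReversal O u v) ∧ IsAcyclicRel (intervalReversal O u v)) ∧
    intervalReversal (intervalReversal O u v) v u = O ∧
    (∀ u₁ v₁ u₂ v₂ : V, O u₁ v₁ → O u₂ v₂ →
      intervalReversal O u₁ v₁ = intervalReversal O u₂ v₂ → u₁ = u₂ ∧ v₁ = v₂) :=
  ⟨⟨hO.intervalReversal u v, hacyc.intervalReversal u v⟩,
    intervalReversal_intervalReversal hacyc (.single huv),
    fun _ _ _ _ => eq_of_intervalReversal_eq hacyc⟩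

/-- (a) the interval reversal of an acyclic orientation is an acyclic
orientation; (b) reversing the same edge again recovers `O` (in `O_{{u,v}}` the edge
`{u,v}` is directed `(v,u)`); (c) interval reversals along distinct edges are distinct. -/
theorem stmt16 (V : Type*) [Fintype V] (G : SimpleGraph V) (O : V → V → Prop)
    (hO : IsOrientation G O) (hacyc : IsAcyclicRel O)
    (u v : V) (hE : G.Adj u v) (huv : O u v) :
    (IsOrientation G (intervalReversal O u v) ∧ IsAcyclicRel (intervalReversal O u v)) ∧
    intervalReversal (intervalReversal O u v) v u = O ∧
    (∀ u₁ v₁ u₂ v₂ : V, O u₁ v₁ → O u₂ v₂ →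
      intervalReversal O u₁ v₁ = intervalReversal O u₂ v₂ → u₁ = u₂ ∧ v₁ = v₂) :=
  stmt16_general V G O hO hacyc u v huv
end

section
/- Let n ≥ 1 and p ∈ (0,1), and write q = 1 − p and N = n(n−1)/2. For a set H of edges of the complete graph on [n], let α(H) denote the number of acyclic orientations of the simple graph ([n], H). Then Σ_{H} p^{|H|} q^{N − |H|} α(H) = Σ_{a} p^{|supp(a)|} q^{N − Area(a)}, where the first sum runs over all subsets H of the edge set of the complete graph on [n] and the second sum runs over all parking functions a of [n]. (The left-hand side is the expected number of acyclic orientations of an Erdős–Rényi random graph G(n,p); note Area(a) ≤ N for every parking function a, so all exponents are natural numbers.) -/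
/-- The number of acyclic orientations of the simple graph on `[n]` with edge set `H`. -/
noncomputable def acycCount (n : ℕ) (H : Finset (Sym2 (Fin n))) : ℕ :=
  Nat.card {O : Fin n → Fin n → Prop //
    IsOrientation (SimpleGraph.fromEdgeSet (↑H : Set (Sym2 (Fin n)))) O ∧ IsAcyclicRel O}

/-- `a` is a parking function of `[n]` (0-indexed): after sorting increasingly by any
permutation `σ`, the `i`-th smallest value is at most `i`. -/
def IsParkingFn (n : ℕ) (a : Fin n → ℕ) : Prop :=
  ∀ σ : Equiv.Perm (Fin n), (∀ i j : Fin n, i ≤ j → a (σ i) ≤ a (σ j)) →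
    ∀ i : Fin n, a (σ i) ≤ (i : ℕ)

open Finset

section Greedy

variable {α : Type*} [LinearOrder α] (f : List α → Finset α)

def greedyStep (l : List α) : List α :=
  if h : (f l \ l.toFinset).Nonempty then l ++ [(f l \ l.toFinset).max' h] else l

def greedy (j : ℕ) : List α := (greedyStep f)^[j] []

def GreedyFeasible : Prop := ∀ l : List α, (∃ i, i ∉ l) → ∃ i ∉ l, i ∈ f l

def greedyOrder [Fintype α] : List α := greedy f (Fintype.card α)

def greedyPos [Fintype α] (i : α) : ℕ := (greedyOrder f).idxOf i

variable {f}

lemma greedy_succ (j : ℕ) : greedy f (j + 1) = greedyStep f (greedy f j) :=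
  Function.iterate_succ_apply' _ _ _

lemma prefix_greedyStep (l : List α) : l <+: greedyStep f l := by
  unfold greedyStep
  split
  · exact List.prefix_append _ _
  · exact List.prefix_refl _

lemma greedy_prefix {j k : ℕ} (h : j ≤ k) : greedy f j <+: greedy f k := by
  induction k, h using Nat.le_induction with
  | base => exact List.prefix_refl _
  | succ k _ ih => exact ih.trans (by rw [greedy_succ]; exact prefix_greedyStep _)

lemma nodup_greedy (j : ℕ) : (greedy f j).Nodup := by
  induction j with
  | zero => exact List.nodup_nil
  | succ j ih =>
    rw [greedy_succ, greedyStep]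
    split
    · next h =>
      have hmem := (mem_sdiff.mp ((f _ \ _).max'_mem h)).2
      exact ih.append (List.nodup_singleton _)
        (List.disjoint_singleton.mpr (by simpa using hmem))
    · exact ih

variable [Fintype α]

lemma length_greedy (hf : GreedyFeasible f) {j : ℕ} (hj : j ≤ Fintype.card α) :
    (greedy f j).length = j := by
  induction j with
  | zero => rfl
  | succ j ih =>
    have hl := ih (by omega)
    have hmiss : ∃ i, i ∉ greedy f j := by
      by_contra! hall
      have := (greedy f j).toFinset_card_of_nodup (nodup_greedy j)
      rw [eq_univ_iff_forall.mpr (fun i => List.mem_toFinset.mpr (hall i)), card_univ] at this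
      omega
    obtain ⟨i, hi, hif⟩ := hf _ hmiss
    have hne : (f (greedy f j) \ (greedy f j).toFinset).Nonempty := ⟨i, by simp [hi, hif]⟩
    rw [greedy_succ, greedyStep, dif_pos hne, List.length_append, hl, List.length_singleton]

lemma mem_greedyOrder (hf : GreedyFeasible f) (i : α) : i ∈ greedyOrder f := by
  have h := (greedyOrder f).toFinset_card_of_nodup (nodup_greedy _)
  rw [greedyOrder, length_greedy hf le_rfl, ← card_univ] at h
  exact List.mem_toFinset.mp (eq_univ_of_card _ h ▸ mem_univ i)

lemma mem_greedy_iff (hf : GreedyFeasible f) {j : ℕ} (hj : j ≤ Fintype.card α) (i : α) :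
    i ∈ greedy f j ↔ greedyPos f i < j := by
  rw [(greedy_prefix hj).mem_iff_idxOf_lt_length, length_greedy hf hj]; rfl

lemma greedyPos_lt (hf : GreedyFeasible f) (i : α) : greedyPos f i < Fintype.card α := by
  simpa [greedyPos, greedyOrder, length_greedy hf le_rfl] using
    List.idxOf_lt_length_of_mem (mem_greedyOrder hf i)

lemma greedyPos_injective (hf : GreedyFeasible f) : Function.Injective (greedyPos f) :=
  fun _ _ h => (List.idxOf_inj (mem_greedyOrder hf _)).mp h

lemma image_greedyPos (hf : GreedyFeasible f) :
    univ.image (greedyPos f) = range (Fintype.card α) :=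
  eq_of_subset_of_card_le (fun t ht => by
      obtain ⟨i, -, rfl⟩ := mem_image.mp ht
      exact mem_range.mpr (greedyPos_lt hf i))
    (by rw [card_image_of_injective _ (greedyPos_injective hf), card_range, card_univ])

lemma mem_candidates_greedy_greedyPos (hf : GreedyFeasible f) (i : α) :
    i ∈ f (greedy f (greedyPos f i)) := by
  set j := greedyPos f i
  have hj := greedyPos_lt hf i
  have hin : i ∈ greedy f (j + 1) := (mem_greedy_iff hf hj _).mpr (Nat.lt_succ_self j)
  have hout : i ∉ greedy f j := fun h => (lt_irrefl j) ((mem_greedy_iff hf hj.le _).mp h)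
  rw [greedy_succ, greedyStep] at hin
  split at hin
  · next h =>
    rcases List.mem_append.mp hin with h' | h'
    · exact absurd h' hout
    · exact (List.mem_singleton.mp h') ▸ (mem_sdiff.mp ((f _ \ _).max'_mem h)).1
  · exact absurd hin hout

lemma greedyPos_congr {g : List α → Finset α}
    (h : ∀ j < Fintype.card α, f (greedy g j) = g (greedy g j)) : greedyPos f = greedyPos g := by
  suffices ∀ j ≤ Fintype.card α, greedy f j = greedy g j by
    unfold greedyPos greedyOrder
    rw [this _ le_rfl]
  intro j hj
  induction j with
  | zero => rfl
  | succ j ih => rw [greedy_succ, greedy_succ, ih (by omega), greedyStep, greedyStep, h j hj]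

end Greedy

section Ranking

variable {α : Type*} [Fintype α]

def minDigraph (pos a : α → ℕ) : Finset (α × α) := {e | pos e.2 + 1 = a e.1}

def maxDigraph (pos a : α → ℕ) : Finset (α × α) := {e | pos e.2 < a e.1}

lemma minDigraph_subset_maxDigraph (pos a : α → ℕ) :
    minDigraph pos a ⊆ maxDigraph pos a := by
  intro e
  simp only [minDigraph, maxDigraph, mem_filter, mem_univ, true_and]
  omega

lemma card_prod_filter (P : α → α → Prop) [DecidableRel P] :
    #{e : α × α | P e.1 e.2} = ∑ u, #{v | P u v} := by
  simp only [card_filter, Fintype.sum_prod_type]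

variable {pos : α → ℕ} {N : ℕ}

section Counting

variable (hpos : Function.Injective pos) (himg : univ.image pos = range N)
include hpos himg

lemma card_filter_comp_eq (P : ℕ → Prop) [DecidablePred P] :
    #{v | P (pos v)} = #{t ∈ range N | P t} := by
  rw [← himg, filter_image, card_image_of_injective _ hpos]

lemma card_filter_lt_eq {k : ℕ} (hk : k ≤ N) : #{v | pos v < k} = k := by
  rw [card_filter_comp_eq hpos himg (· < k)]
  convert card_range k using 2
  ext t
  simp only [mem_filter, mem_range]
  omega

lemma card_filter_add_one_eq {k : ℕ} (hk : k ≤ N) :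
    #{v | pos v + 1 = k} = if 0 < k then 1 else 0 := by
  rw [card_filter_comp_eq hpos himg (· + 1 = k)]
  split_ifs with h
  · refine card_eq_one.mpr ⟨k - 1, ?_⟩
    ext t
    simp only [mem_filter, mem_range, mem_singleton]
    omega
  · exact card_eq_zero.mpr (filter_false_of_mem fun t _ => by omega)

lemma sum_le_of_le_pos {a : α → ℕ} (ha : ∀ i, a i ≤ pos i) :
    ∑ i, a i ≤ N * (N - 1) / 2 := by
  rw [← sum_range_id, ← himg, sum_image fun _ _ _ _ h => hpos h]
  exact sum_le_sum fun i _ => ha i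

lemma card_maxDigraph {a : α → ℕ} (ha : ∀ u, a u ≤ N) :
    #(maxDigraph pos a) = ∑ u, a u := by
  rw [maxDigraph, card_prod_filter fun u v => pos v < a u]
  exact sum_congr rfl fun u _ => card_filter_lt_eq hpos himg (ha u)

lemma card_minDigraph {a : α → ℕ} (ha : ∀ u, a u ≤ N) :
    #(minDigraph pos a) = #{u | 0 < a u} := by
  rw [minDigraph, card_prod_filter fun u v => pos v + 1 = a u, card_filter]
  exact sum_congr rfl fun u _ => card_filter_add_one_eq hpos himg (ha u)

end Counting

variable [DecidableEq α] {D : Finset (α × α)}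

def outDepth (pos : α → ℕ) (D : Finset (α × α)) (u : α) : ℕ :=
  ({v | (u, v) ∈ D} : Finset α).sup fun v => pos v + 1

lemma outDepth_le_iff {u : α} {k : ℕ} :
    outDepth pos D u ≤ k ↔ ∀ v, (u, v) ∈ D → pos v < k := by
  simp [outDepth, Finset.sup_le_iff]

lemma le_outDepth {u v : α} (h : (u, v) ∈ D) : pos v + 1 ≤ outDepth pos D u :=
  le_sup (f := fun v => pos v + 1) (by simpa using h)

lemma outDepth_eq_iff_mem_Icc (hpos : Function.Injective pos) (himg : univ.image pos = range N)
    {a : α → ℕ} (ha : ∀ u, a u ≤ N) :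
    outDepth pos D = a ↔ D ∈ Icc (minDigraph pos a) (maxDigraph pos a) := by
  simp only [mem_Icc, subset_iff, minDigraph, maxDigraph, mem_filter, mem_univ, true_and,
    Prod.forall]
  constructor
  · rintro rfl
    refine ⟨fun u v huv => ?_, fun u v huv => le_outDepth huv⟩
    have hne : ({w | (u, w) ∈ D} : Finset α).Nonempty := by
      by_contra h
      simp [outDepth, not_nonempty_iff_eq_empty.mp h] at huv
    obtain ⟨w, hw, hsup⟩ := exists_mem_eq_sup _ hne fun w => pos w + 1
    rw [outDepth, hsup, add_left_inj] at huv
    rw [hpos huv]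
    simpa using hw
  · rintro ⟨hmin, hmax⟩
    funext u
    refine le_antisymm (outDepth_le_iff.mpr fun v => hmax u v) ?_
    rcases Nat.eq_zero_or_pos (a u) with h0 | h0
    · simp [h0]
    obtain ⟨v, -, hv⟩ : ∃ v ∈ univ, pos v = a u - 1 :=
      mem_image.mp (himg ▸ mem_range.mpr (by have := ha u; omega))
    have := le_outDepth (pos := pos) (hmin u v (by omega))
    omega

end Ranking

section Acyclic

variable {V : Type*} {O : V → V → Prop}

lemma isAcyclicRel_of_map_lt {β : Type*} [Preorder β] (m : V → β)
    (h : ∀ u v, O u v → m v < m u) : IsAcyclicRel O := by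
  have key : ∀ {u v}, Relation.TransGen O u v → m v < m u := by
    intro u v huv
    induction huv with
    | single h' => exact h _ _ h'
    | tail _ h' ih => exact (h _ _ h').trans ih
  exact fun v hv => lt_irrefl _ (key hv)

lemma IsAcyclicRel.irrefl (hO : IsAcyclicRel O) (u : V) : ¬ O u u :=
  fun h => hO u (.single h)

lemma IsAcyclicRel.asymm (hO : IsAcyclicRel O) {u v : V} (h : O u v) : ¬ O v u :=
  fun h' => hO u (.tail (.single h) h')

lemma IsAcyclicRel.exists_sink [Finite V] (hO : IsAcyclicRel O) {s : Set V} (hs : s.Nonempty) :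
    ∃ i ∈ s, ∀ v ∈ s, ¬ O i v := by
  let r : V → V → Prop := fun x y => Relation.TransGen O y x
  have : IsTrans V r := ⟨fun _ _ _ hab hbc => hbc.trans hab⟩
  have : Std.Irrefl r := ⟨fun a => hO a⟩
  obtain ⟨i, hi, hmin⟩ := (Finite.wellFounded_of_trans_of_irrefl r).has_min s hs
  exact ⟨i, hi, fun v hv hiv => hmin v hv (.single hiv)⟩

end Acyclic

section Candidates

variable {α : Type*} [Fintype α] [LinearOrder α] {D : Finset (α × α)}

def sinkCandidates (D : Finset (α × α)) (l : List α) : Finset α :=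
  {i | ∀ v, (i, v) ∈ D → v ∈ l}

def parkingCandidates (a : α → ℕ) (l : List α) : Finset α := {i | a i ≤ l.length}

lemma greedyFeasible_sinkCandidates (hD : IsAcyclicRel fun u v => (u, v) ∈ D) :
    GreedyFeasible (sinkCandidates D) := by
  intro l hl
  obtain ⟨i, hi, hsink⟩ := hD.exists_sink (s := {v | v ∉ l}) hl
  exact ⟨i, hi, by simpa [sinkCandidates] using fun v hv => by_contra (hsink v · hv)⟩

lemma greedyPos_sinkCandidates_lt (hD : IsAcyclicRel fun u v => (u, v) ∈ D) {u v : α}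
    (huv : (u, v) ∈ D) : greedyPos (sinkCandidates D) v < greedyPos (sinkCandidates D) u := by
  have hf := greedyFeasible_sinkCandidates hD
  have hu := mem_candidates_greedy_greedyPos hf u
  simp only [sinkCandidates, mem_filter, mem_univ, true_and] at hu
  exact (mem_greedy_iff hf (greedyPos_lt hf u).le v).mp (hu v huv)

-- This is why `D` and `outDepth pos D` generate the same greedy order.
lemma sinkCandidates_eq_parkingCandidates {pos : α → ℕ} {l : List α}
    (hl : ∀ i, i ∈ l ↔ pos i < l.length) :
    sinkCandidates D l = parkingCandidates (outDepth pos D) l := by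
  ext i
  simp [sinkCandidates, parkingCandidates, outDepth_le_iff, hl]

lemma sinkCandidates_greedy_eq_parkingCandidates {g : List α → Finset α} (hg : GreedyFeasible g)
    {j : ℕ}    (hj : j ≤ Fintype.card α) :
    sinkCandidates D (greedy g j) = parkingCandidates (outDepth (greedyPos g) D) (greedy g j) :=
  sinkCandidates_eq_parkingCandidates fun i => by rw [length_greedy hg hj, mem_greedy_iff hg hj]

end Candidates

section Parking

variable {n : ℕ} {a : Fin n → ℕ}

lemma isParkingFn_iff_card : IsParkingFn n a ↔ ∀ j < n, j < #{i | a i ≤ j} := by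
  constructor
  · intro ha j hj
    have hsorted := ha (Tuple.sort a) fun i k hik => Tuple.monotone_sort a hik
    calc j < #(Iic (⟨j, hj⟩ : Fin n)) := by simp
      _ = #((Iic ⟨j, hj⟩).map (Tuple.sort a).toEmbedding) := (card_map _).symm
      _ ≤ #{i | a i ≤ j} := card_le_card fun i hi => by
          obtain ⟨k, hk, rfl⟩ := mem_map.mp hi
          simpa using (hsorted k).trans (Fin.le_def.mp (Finset.mem_Iic.mp hk))
  · intro hcard σ hσ i
    by_contra! hlt
    have hsub : ({t | a t ≤ i} : Finset (Fin n)) ⊆ (Iio i).map σ.toEmbedding := by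
      intro t ht
      simp only [mem_filter, mem_univ, true_and] at ht
      refine mem_map_equiv.mpr (mem_Iio.mpr ?_)
      by_contra! hle
      have := hσ i (σ.symm t) hle
      simp only [Equiv.apply_symm_apply] at this
      omega
    have := card_le_card hsub
    rw [card_map, Fin.card_Iio] at this
    have := hcard i i.isLt
    omega

lemma isParkingFn_of_le_pos {pos : Fin n → ℕ} (hpos : Function.Injective pos)
    (himg : univ.image pos = range n) (ha : ∀ i, a i ≤ pos i) : IsParkingFn n a := by
  refine isParkingFn_iff_card.mpr fun j hj => ?_
  calc j < #{i | pos i < j + 1} := by rw [card_filter_lt_eq hpos himg (k := j + 1) hj]; omega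
    _ ≤ #{i | a i ≤ j} := card_le_card fun i hi => by
        simp only [mem_filter, mem_univ, true_and] at hi ⊢
        have := ha i
        omega

lemma greedyFeasible_parkingCandidates (ha : IsParkingFn n a) :
    GreedyFeasible (parkingCandidates a) := by
  intro l ⟨i₀, hi₀⟩
  have hlt : #l.toFinset < n := by
    simpa using card_lt_card (ssubset_univ_iff.mpr fun h : l.toFinset = univ =>
      hi₀ (List.mem_toFinset.mp (h ▸ mem_univ i₀)))
  have hcount := isParkingFn_iff_card.mp ha _ hlt
  obtain ⟨i, hi, hil⟩ := not_subset.mp fun h => (card_le_card h).not_gt hcount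
  simp only [mem_filter, mem_univ, true_and, List.mem_toFinset] at hi hil
  exact ⟨i, hil, by simpa [parkingCandidates] using hi.trans l.toFinset_card_le⟩

lemma le_greedyPos_parkingCandidates (ha : IsParkingFn n a) (i : Fin n) :
    a i ≤ greedyPos (parkingCandidates a) i := by
  have hf := greedyFeasible_parkingCandidates ha
  have hi := mem_candidates_greedy_greedyPos hf i
  simp only [parkingCandidates, mem_filter, mem_univ, true_and] at hi
  rwa [length_greedy hf (greedyPos_lt hf i).le] at hi

lemma IsParkingFn.apply_lt (ha : IsParkingFn n a) (i : Fin n) : a i < n :=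
  (le_greedyPos_parkingCandidates ha i).trans_lt <| by
    simpa using greedyPos_lt (greedyFeasible_parkingCandidates ha) i

end Parking

lemma sum_Icc_pow_mul_one_sub_pow {ι R : Type*} [DecidableEq ι] [CommRing R] {s t : Finset ι}
    (hst : s ⊆ t) {N : ℕ} (ht : #t ≤ N) (p : R) :
    ∑ u ∈ Icc s t, p ^ #u * (1 - p) ^ (N - #u) = p ^ #s * (1 - p) ^ (N - #t) := by
  have hdisj {u} (hu : u ∈ (t \ s).powerset) : Disjoint s u :=
    disjoint_of_subset_right (mem_powerset.mp hu) disjoint_sdiff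
  have hinj : Set.InjOn (s ∪ ·) ↑(t \ s).powerset := fun u hu u' hu' h => by
    rw [← union_sdiff_cancel_left (hdisj hu), ← union_sdiff_cancel_left (hdisj hu')]
    exact congrArg (· \ s) h
  rw [Icc_eq_image_powerset hst, sum_image hinj]
  calc ∑ u ∈ (t \ s).powerset, p ^ #(s ∪ u) * (1 - p) ^ (N - #(s ∪ u))
      = ∑ u ∈ (t \ s).powerset,
          p ^ #s * (1 - p) ^ (N - #t) * (p ^ #u * (1 - p) ^ (#(t \ s) - #u)) := by
        refine sum_congr rfl fun u hu => ?_
        have : #u ≤ #(t \ s) := card_le_card (mem_powerset.mp hu)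
        have : #(t \ s) = #t - #s := card_sdiff_of_subset hst
        have : #s ≤ #t := card_le_card hst
        rw [card_union_of_disjoint (hdisj hu),
          show N - (#s + #u) = (N - #t) + (#(t \ s) - #u) by omega, pow_add, pow_add]
        ring
    _ = p ^ #s * (1 - p) ^ (N - #t) := by
        rw [← mul_sum, sum_pow_mul_eq_add_pow, add_sub_cancel, one_pow, mul_one]

open Classical in
noncomputable def acyclicDigraphs (α : Type*) [Fintype α] : Finset (Finset (α × α)) :=
  {D | IsAcyclicRel fun u v => (u, v) ∈ D}

lemma mem_acyclicDigraphs {α : Type*} [Fintype α] {D : Finset (α × α)} :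
    D ∈ acyclicDigraphs α ↔ IsAcyclicRel fun u v => (u, v) ∈ D := by
  simp [acyclicDigraphs]

open Classical in
noncomputable def parkingFns (n : ℕ) : Finset (Fin n → ℕ) :=
  {a ∈ Fintype.piFinset fun _ => range n | IsParkingFn n a}

lemma mem_parkingFns {n : ℕ} {a : Fin n → ℕ} : a ∈ parkingFns n ↔ IsParkingFn n a := by
  simp only [parkingFns, mem_filter, Fintype.mem_piFinset, mem_range, and_iff_right_iff_imp]
  exact IsParkingFn.apply_lt

section Fibre

variable {n : ℕ} {D : Finset (Fin n × Fin n)} {a : Fin n → ℕ}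

def toParkingFn (D : Finset (Fin n × Fin n)) : Fin n → ℕ :=
  outDepth (greedyPos (sinkCandidates D)) D

lemma isParkingFn_toParkingFn (hD : IsAcyclicRel fun u v => (u, v) ∈ D) :
    IsParkingFn n (toParkingFn D) := by
  have hf := greedyFeasible_sinkCandidates hD
  refine isParkingFn_of_le_pos (greedyPos_injective hf) (by simpa using image_greedyPos hf)
    fun u => outDepth_le_iff.mpr fun v huv => greedyPos_sinkCandidates_lt hD huv

lemma acyclic_and_toParkingFn_eq_iff_mem_Icc (ha : IsParkingFn n a) :
    ((IsAcyclicRel fun u v => (u, v) ∈ D) ∧ toParkingFn D = a) ↔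
      D ∈ Icc (minDigraph (greedyPos (parkingCandidates a)) a)
        (maxDigraph (greedyPos (parkingCandidates a)) a) := by
  have hf := greedyFeasible_parkingCandidates ha
  rw [← outDepth_eq_iff_mem_Icc (greedyPos_injective hf) (image_greedyPos hf)
    fun u => (ha.apply_lt u).le.trans (Fintype.card_fin n).ge]
  constructor
  · rintro ⟨hD, rfl⟩
    have hD' := greedyFeasible_sinkCandidates hD
    have : greedyPos (parkingCandidates (toParkingFn D)) = greedyPos (sinkCandidates D) :=
      greedyPos_congr fun j hj => (sinkCandidates_greedy_eq_parkingCandidates hD' hj.le).symm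
    rw [this]
    rfl
  · intro h
    have hD : IsAcyclicRel fun u v => (u, v) ∈ D :=
      isAcyclicRel_of_map_lt (greedyPos (parkingCandidates a)) fun u v huv => by
        have := le_outDepth (pos := greedyPos (parkingCandidates a)) huv
        have := le_greedyPos_parkingCandidates ha u
        rw [h] at *
        omega
    have : greedyPos (sinkCandidates D) = greedyPos (parkingCandidates a) :=
      greedyPos_congr fun j hj => by rw [sinkCandidates_greedy_eq_parkingCandidates hf hj.le, h]
    exact ⟨hD, by rw [toParkingFn, this, h]⟩

lemma sum_acyclicDigraphs_eq_sum_parkingFns {R : Type*} [CommRing R] (n : ℕ) (p : R) :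
    ∑ D ∈ acyclicDigraphs (Fin n), p ^ #D * (1 - p) ^ (n * (n - 1) / 2 - #D) =
      ∑ a ∈ parkingFns n, p ^ #{i | 0 < a i} * (1 - p) ^ (n * (n - 1) / 2 - ∑ i, a i) := by
  rw [← sum_fiberwise_of_maps_to (g := toParkingFn) (t := parkingFns n)
    fun D hD => mem_parkingFns.mpr (isParkingFn_toParkingFn (mem_acyclicDigraphs.mp hD))]
  refine sum_congr rfl fun a ha => ?_
  replace ha := mem_parkingFns.mp ha
  have hf := greedyFeasible_parkingCandidates ha
  have hpos := greedyPos_injective hf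
  have himg : univ.image (greedyPos (parkingCandidates a)) = range n := by
    simpa using image_greedyPos hf
  have hle u : a u ≤ n := (ha.apply_lt u).le
  have hfibre : {D ∈ acyclicDigraphs (Fin n) | toParkingFn D = a} =
      Icc (minDigraph (greedyPos (parkingCandidates a)) a)
        (maxDigraph (greedyPos (parkingCandidates a)) a) := by
    ext D
    rw [mem_filter, mem_acyclicDigraphs, acyclic_and_toParkingFn_eq_iff_mem_Icc ha]
  have hmax : #(maxDigraph (greedyPos (parkingCandidates a)) a) ≤ n * (n - 1) / 2 := by
    rw [card_maxDigraph hpos himg hle]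
    exact sum_le_of_le_pos hpos himg (le_greedyPos_parkingCandidates ha)
  rw [hfibre, sum_Icc_pow_mul_one_sub_pow (minDigraph_subset_maxDigraph _ a) hmax,
    card_minDigraph hpos himg hle, card_maxDigraph hpos himg hle]

end Fibre

section Orientation

variable {V : Type*} [DecidableEq V] {D : Finset (V × V)}

lemma card_image_mk_uncurry (hD : IsAcyclicRel fun u v => (u, v) ∈ D) :
    #(D.image Sym2.mk.uncurry) = #D :=
  card_image_of_injOn fun ⟨u, v⟩ huv ⟨u', v'⟩ huv' h => by
    rcases Sym2.eq_iff.mp h with ⟨rfl, rfl⟩ | ⟨rfl, rfl⟩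
    · rfl
    · exact (hD.asymm huv huv').elim

lemma not_isDiag_of_mem_image_mk_uncurry (hD : IsAcyclicRel fun u v => (u, v) ∈ D) {e : Sym2 V}
    (he : e ∈ D.image Sym2.mk.uncurry) : ¬ e.IsDiag := by
  obtain ⟨⟨u, v⟩, huv, rfl⟩ := mem_image.mp he
  rintro (rfl : u = v)
  exact hD.irrefl u huv

lemma isOrientation_iff_image_mk_uncurry_eq (hD : IsAcyclicRel fun u v => (u, v) ∈ D)
    {H : Finset (Sym2 V)} (hH : ∀ e ∈ H, ¬ e.IsDiag) :
    IsOrientation (SimpleGraph.fromEdgeSet ↑H) (fun u v => (u, v) ∈ D) ↔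
      D.image Sym2.mk.uncurry = H := by
  have hmem u v : s(u, v) ∈ D.image Sym2.mk.uncurry ↔ (u, v) ∈ D ∨ (v, u) ∈ D := by
    simp only [mem_image, Prod.exists, Function.uncurry_apply_pair, Sym2.eq_iff]
    grind
  constructor
  · rintro ⟨hadj, horient⟩
    ext e
    induction e using Sym2.ind with | _ u v => ?_
    rw [hmem]
    constructor
    · rintro (h | h)
      · exact ((SimpleGraph.fromEdgeSet_adj _).mp (hadj u v h)).1
      · exact Sym2.eq_swap ▸ ((SimpleGraph.fromEdgeSet_adj _).mp (hadj v u h)).1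
    · intro he
      have hne : u ≠ v := fun h => hH _ he (Sym2.mk_isDiag_iff.mpr h)
      have := horient u v ((SimpleGraph.fromEdgeSet_adj _).mpr ⟨he, hne⟩)
      tauto
  · rintro rfl
    refine ⟨fun u v huv => (SimpleGraph.fromEdgeSet_adj _).mpr
      ⟨mem_image_of_mem _ huv, fun h => hD.irrefl u (h ▸ huv)⟩, fun u v hadj => ?_⟩
    have := ((SimpleGraph.fromEdgeSet_adj _).mp hadj).1
    rw [mem_coe, hmem] at this
    exact ⟨hD.asymm, fun h => this.resolve_right h⟩

end Orientation

lemma acycCount_eq_card {n : ℕ} {H : Finset (Sym2 (Fin n))} (hH : ∀ e ∈ H, ¬ e.IsDiag) :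
    acycCount n H = #{D ∈ acyclicDigraphs (Fin n) | D.image Sym2.mk.uncurry = H} := by
  let toRel : Finset (Fin n × Fin n) ≃ (Fin n → Fin n → Prop) :=
    Fintype.finsetEquivSet.trans (Equiv.curry _ _ _)
  rw [acycCount, ← Nat.card_eq_finsetCard]
  refine Nat.card_congr (toRel.subtypeEquiv fun D => ?_).symm
  change _ ↔ IsOrientation _ (fun u v => (u, v) ∈ D) ∧ IsAcyclicRel fun u v => (u, v) ∈ D
  rw [mem_filter, mem_acyclicDigraphs, and_comm]
  exact and_congr_left fun hD => (isOrientation_iff_image_mk_uncurry_eq hD hH).symm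

lemma sum_mul_acycCount_eq_sum_acyclicDigraphs {R : Type*} [CommSemiring R] (n : ℕ)
    (w : ℕ → R) :
    ∑ H : Finset (Sym2 (Fin n)) with ∀ e ∈ H, ¬ e.IsDiag, w #H * (acycCount n H : R) =
      ∑ D ∈ acyclicDigraphs (Fin n), w #D := by
  rw [← sum_fiberwise_of_maps_to (g := fun D => D.image Sym2.mk.uncurry)
    (t := {H | ∀ e ∈ H, ¬ e.IsDiag}) fun D hD => mem_filter.mpr
      ⟨mem_univ _, fun _ => not_isDiag_of_mem_image_mk_uncurry (mem_acyclicDigraphs.mp hD)⟩]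
  refine sum_congr rfl fun H hH => ?_
  have hw : ∀ D ∈ {D ∈ acyclicDigraphs (Fin n) | D.image Sym2.mk.uncurry = H},
      w #D = w #H := by
    intro D hD
    obtain ⟨hacyc, rfl⟩ := mem_filter.mp hD
    rw [card_image_mk_uncurry (mem_acyclicDigraphs.mp hacyc)]
  rw [sum_congr rfl hw, sum_const, nsmul_eq_mul, mul_comm, acycCount_eq_card (mem_filter.mp hH).2]

theorem stmt18_general (n : ℕ) (p : ℝ) :
    ∑ᶠ H ∈ {H : Finset (Sym2 (Fin n)) | ∀ e ∈ H, ¬ e.IsDiag},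
        p ^ H.card * (1 - p) ^ (n * (n - 1) / 2 - H.card) * (acycCount n H : ℝ) =
      ∑ᶠ a ∈ {a : Fin n → ℕ | IsParkingFn n a},
        p ^ ({i : Fin n | 0 < a i}.ncard) *
          (1 - p) ^ (n * (n - 1) / 2 - ∑ i, a i) := by
  have hloopless : {H : Finset (Sym2 (Fin n)) | ∀ e ∈ H, ¬ e.IsDiag} =
      ↑({H | ∀ e ∈ H, ¬ e.IsDiag} : Finset (Finset (Sym2 (Fin n)))) := by
    ext
    simp
  have hparking : {a : Fin n → ℕ | IsParkingFn n a} = ↑(parkingFns n) := by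
    ext
    simp [mem_parkingFns]
  rw [hloopless, hparking, finsum_mem_coe_finset, finsum_mem_coe_finset,
    sum_mul_acycCount_eq_sum_acyclicDigraphs n fun k => p ^ k * (1 - p) ^ (n * (n - 1) / 2 - k),
    sum_acyclicDigraphs_eq_sum_parkingFns]
  simp [Set.ncard_eq_toFinset_card']

/-- the expected number of acyclic orientations of an Erdős–Rényi random
graph `G(n,p)`, namely `Σ_H p^{|H|} q^{N-|H|} α(H)` over all edge subsets `H` of the
complete graph on `[n]`, equals `Σ_a p^{|supp a|} q^{N - Area a}` over all parking
functions `a` of `[n]`, where `q = 1 - p` and `N = n(n-1)/2`. -/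
theorem stmt18 (n : ℕ) (hn : 1 ≤ n) (p : ℝ) (hp0 : 0 < p) (hp1 : p < 1) :
    ∑ᶠ H ∈ {H : Finset (Sym2 (Fin n)) | ∀ e ∈ H, ¬ e.IsDiag},
        p ^ H.card * (1 - p) ^ (n * (n - 1) / 2 - H.card) * (acycCount n H : ℝ) =
      ∑ᶠ a ∈ {a : Fin n → ℕ | IsParkingFn n a},
        p ^ ({i : Fin n | 0 < a i}.ncard) *
          (1 - p) ^ (n * (n - 1) / 2 - ∑ i, a i) :=
  stmt18_general n p
end

section
/- Let G = ([n], E) be a finite simple graph, k ≥ 1 an integer, and k a field (for the polynomial ring). For A ⊆ [n], define the k-neighbor bootstrap percolation process by A_0 = A and A_t = A_{t−1} ∪ { i ∈ [n] : |N_G(i) ∩ A_{t−1}| ≥ k } for t ≥ 1, and let cl(A) = ⋃_{t≥0} A_t; say A percolates in G if cl(A) = [n]. Let B be the square-free monomial ideal of k[x_1,…,x_n] generated by the monomials ∏_{i∈σ} x_i over all nonempty σ ⊆ [n] such that dout_σ(i) < k for every i ∈ σ, where dout_σ(i) = |{ j ∈ [n]∖σ : {i,j} ∈ E }|. Then for every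 A ⊆ [n]: A percolates in G if and only if the monomial ∏_{i ∈ [n]∖A} x_i does not belong to B. -/
open MvPolynomial

def bootstrap {n : ℕ} (G : SimpleGraph (Fin n)) (k : ℕ) (A : Set (Fin n)) :
    ℕ → Set (Fin n)
  | 0 => A
  | t + 1 => bootstrap G k A t ∪
      {i : Fin n | k ≤ (G.neighborSet i ∩ bootstrap G k A t).ncard}

def bootstrapCl {n : ℕ} (G : SimpleGraph (Fin n)) (k : ℕ) (A : Set (Fin n)) : Set (Fin n) :=
  ⋃ t : ℕ, bootstrap G k A t

def Percolates {n : ℕ} (G : SimpleGraph (Fin n)) (k : ℕ) (A : Set (Fin n)) : Prop :=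
  bootstrapCl G k A = Set.univ

noncomputable def doutDeg {n : ℕ} (G : SimpleGraph (Fin n)) (σ : Finset (Fin n)) (i : Fin n) :
    ℕ :=
  {j : Fin n | j ∉ σ ∧ G.Adj i j}.ncard

noncomputable def percIdeal (n : ℕ) (G : SimpleGraph (Fin n)) (k : ℕ)
    (K : Type*) [Field K] : Ideal (MvPolynomial (Fin n) K) :=
  Ideal.span {f | ∃ σ : Finset (Fin n), σ.Nonempty ∧ (∀ i ∈ σ, doutDeg G σ i < k) ∧
    f = ∏ i ∈ σ, (X i : MvPolynomial (Fin n) K)}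

lemma bootstrap_mono {n : ℕ} (G : SimpleGraph (Fin n)) (k : ℕ) (A : Set (Fin n)) :
    Monotone (bootstrap G k A) :=
  monotone_nat_of_le_succ fun _ => Set.subset_union_left

lemma aux_prod_X {n : ℕ} (K : Type*) [Field K] (s : Finset (Fin n)) :
    ∏ i ∈ s, (X i : MvPolynomial (Fin n) K) =
      monomial (∑ i ∈ s, Finsupp.single i 1) 1 := by
  induction s using Finset.cons_induction with
  | empty => simp
  | cons a s ha ih =>
      rw [Finset.prod_cons, ih, Finset.sum_cons, X, monomial_mul, one_mul]

lemma aux_e_apply {n : ℕ} (s : Finset (Fin n)) (j : Fin n) :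
    (∑ i ∈ s, Finsupp.single i (1 : ℕ)) j = if j ∈ s then 1 else 0 := by
  classical
  rw [Finset.sum_apply']
  simp [Finsupp.single_apply]

lemma aux_e_le {n : ℕ} (s t : Finset (Fin n)) :
    (∑ i ∈ s, Finsupp.single i (1 : ℕ)) ≤ (∑ i ∈ t, Finsupp.single i (1 : ℕ)) ↔ s ⊆ t := by
  constructor
  · intro h j hj
    have := h j
    rw [aux_e_apply, aux_e_apply, if_pos hj] at this
    by_contra hjt
    rw [if_neg hjt] at this
    omega
  · intro h j
    rw [aux_e_apply, aux_e_apply]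
    by_cases hj : j ∈ s
    · rw [if_pos hj, if_pos (h hj)]
    · simp [hj]

/-- Algebraic characterization of membership. -/
lemma mem_percIdeal_iff {n : ℕ} (G : SimpleGraph (Fin n)) (k : ℕ)
    (K : Type*) [Field K] (s : Finset (Fin n)) :
    (∏ i ∈ s, (X i : MvPolynomial (Fin n) K)) ∈ percIdeal n G k K ↔
      ∃ σ : Finset (Fin n), σ.Nonempty ∧ (∀ i ∈ σ, doutDeg G σ i < k) ∧ σ ⊆ s := by
  classical
  have hset : {f | ∃ σ : Finset (Fin n), σ.Nonempty ∧ (∀ i ∈ σ, doutDeg G σ i < k) ∧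
      f = ∏ i ∈ σ, (X i : MvPolynomial (Fin n) K)} =
      (fun e => monomial e (1 : K)) ''
        {e | ∃ σ : Finset (Fin n), σ.Nonempty ∧ (∀ i ∈ σ, doutDeg G σ i < k) ∧
          e = ∑ i ∈ σ, Finsupp.single i 1} := by
    ext f
    constructor
    · rintro ⟨σ, h1, h2, rfl⟩
      exact ⟨∑ i ∈ σ, Finsupp.single i 1, ⟨σ, h1, h2, rfl⟩, (aux_prod_X K σ).symm⟩
    · rintro ⟨e, ⟨σ, h1, h2, rfl⟩, rfl⟩
      exact ⟨σ, h1, h2, (aux_prod_X K σ).symm⟩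
  rw [percIdeal, hset, aux_prod_X, mem_ideal_span_monomial_image]
  rw [support_monomial, if_neg (one_ne_zero : (1:K) ≠ 0)]
  simp only [Finset.mem_singleton, forall_eq, Set.mem_setOf_eq]
  constructor
  · rintro ⟨si, ⟨σ, h1, h2, rfl⟩, hle⟩
    exact ⟨σ, h1, h2, (aux_e_le σ s).mp hle⟩
  · rintro ⟨σ, h1, h2, hsub⟩
    exact ⟨_, ⟨σ, h1, h2, rfl⟩, (aux_e_le σ s).mpr hsub⟩

/-- Combinatorial characterization of percolation. -/
lemma percolates_iff {n : ℕ} (G : SimpleGraph (Fin n)) (k : ℕ) (hk : 1 ≤ k)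
    (A : Finset (Fin n)) :
    Percolates G k (↑A : Set (Fin n)) ↔
      ¬ ∃ σ : Finset (Fin n), σ.Nonempty ∧ (∀ i ∈ σ, doutDeg G σ i < k) ∧ σ ⊆ Aᶜ := by
  constructor
  · rintro hperc ⟨σ, hne, hdeg, hsub⟩
    -- σ is never infected
    have hstable : ∀ t, ∀ i ∈ σ, i ∉ bootstrap G k (↑A) t := by
      intro t
      induction t with
      | zero =>
          intro i hi hiA
          exact (Finset.mem_compl.mp (hsub hi)) hiA
      | succ t ih =>
          intro i hi hmem
          rcases hmem with hmem | hmem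
          · exact ih i hi hmem
          · have hsubset : G.neighborSet i ∩ bootstrap G k (↑A) t ⊆
                {j : Fin n | j ∉ σ ∧ G.Adj i j} := by
              rintro j ⟨hj1, hj2⟩
              exact ⟨fun hjσ => ih j hjσ hj2, hj1⟩
            have hcard : (G.neighborSet i ∩ bootstrap G k (↑A) t).ncard ≤ doutDeg G σ i :=
              Set.ncard_le_ncard hsubset (Set.toFinite _)
            have := hdeg i hi
            have : k ≤ doutDeg G σ i := le_trans hmem hcard
            omega
    obtain ⟨i, hi⟩ := hne
    have : i ∈ bootstrapCl G k (↑A) := by rw [hperc]; trivial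
    obtain ⟨_, ⟨t, rfl⟩, hmem⟩ := this
    exact hstable t i hi hmem
  · intro h
    by_contra hnp
    apply h
    set C := bootstrapCl G k (↑A : Set (Fin n)) with hC
    have hCne : Cᶜ.Nonempty := by
      rw [Set.nonempty_compl]
      exact hnp
    classical
    refine ⟨(Set.toFinite Cᶜ).toFinset, ?_, ?_, ?_⟩
    · rw [Set.Finite.toFinset_nonempty]; exact hCne
    · intro i hi
      rw [Set.Finite.mem_toFinset] at hi
      -- find t containing all of N(i) ∩ C
      have hfin : (G.neighborSet i ∩ C).Finite := Set.toFinite _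
      have hchoice : ∀ x : (G.neighborSet i ∩ C : Set (Fin n)), ∃ t, (x : Fin n) ∈ bootstrap G k (↑A) t := by
        rintro ⟨x, _, hx⟩
        obtain ⟨_, ⟨t, rfl⟩, hm⟩ := hx
        exact ⟨t, hm⟩
      choose f hf using hchoice
      haveI : Fintype (G.neighborSet i ∩ C : Set (Fin n)) := Fintype.ofFinite _
      set T := Finset.univ.sup f with hT
      have hsubT : G.neighborSet i ∩ C ⊆ bootstrap G k (↑A) T := by
        intro x hx
        have := hf ⟨x, hx⟩
        exact bootstrap_mono G k (↑A) (Finset.le_sup (Finset.mem_univ ⟨x, hx⟩)) this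
      have hnot : i ∉ bootstrap G k (↑A) (T + 1) := fun hmem =>
        hi (Set.mem_iUnion.mpr ⟨T + 1, hmem⟩)
      have hlt : ¬ k ≤ (G.neighborSet i ∩ bootstrap G k (↑A) T).ncard := by
        intro hge
        exact hnot (Or.inr hge)
      have hsub2 : {j : Fin n | j ∉ (Set.toFinite Cᶜ).toFinset ∧ G.Adj i j} ⊆
          G.neighborSet i ∩ bootstrap G k (↑A) T := by
        rintro j ⟨hj1, hj2⟩
        rw [Set.Finite.mem_toFinset] at hj1
        exact ⟨hj2, hsubT ⟨hj2, by simpa using hj1⟩⟩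
      have := Set.ncard_le_ncard hsub2 (Set.toFinite _)
      rw [doutDeg]
      omega
    · intro j hj
      rw [Set.Finite.mem_toFinset] at hj
      rw [Finset.mem_compl]
      intro hjA
      exact hj (Set.mem_iUnion.mpr ⟨0, hjA⟩)

/-- `A` percolates in `G` under `k`-neighbor bootstrap percolation iff the
square-free monomial `∏_{i ∈ [n]∖A} x_i` is a standard monomial of (i.e. does not belong
to) the `k`-bootstrap percolation ideal. -/
theorem stmt19 (n : ℕ) (G : SimpleGraph (Fin n)) (k : ℕ) (hk : 1 ≤ k)
    (K : Type*) [Field K] (A : Finset (Fin n)) :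
    Percolates G k (↑A : Set (Fin n)) ↔
      (∏ i ∈ Aᶜ, (X i : MvPolynomial (Fin n) K)) ∉ percIdeal n G k K := by
  rw [percolates_iff G k hk A, mem_percIdeal_iff G k K Aᶜ]
end
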